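/- arXiv:1503.01243 — 4 statements merged into one kernel-verified Lean document; each statement's English description precedes it below -/
import Mathlib

section
/- For any L > 0, any convex continuously differentiable function f : ℝⁿ → ℝ whose gradient is L-Lipschitz, and any initial point x₀ ∈ ℝⁿ, the ODE Ẍ(t) + (3/t)Ẋ(t) + ∇f(X(t)) = 0 for t > 0, with initial conditions X(0) = x₀ and Ẋ(0) = 0, has a unique global solution X : [0,∞) → ℝⁿ that is twice continuously differentiable on (0,∞) and continuously differentiable on [0,∞). -/
open Set Filter Topology

noncomputable section

/-- `ℝⁿ` as a Euclidean space. -/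
abbrev E (n : ℕ) := EuclideanSpace ℝ (Fin n)

/-- The class `F_L`: convex, continuously differentiable functions whose gradient is
`L`-Lipschitz. -/
def MemFL (n : ℕ) (L : ℝ) (f : E n → ℝ) : Prop :=
  ConvexOn ℝ Set.univ f ∧ ContDiff ℝ 1 f ∧
    ∀ x y, ‖gradient f x - gradient f y‖ ≤ L * ‖x - y‖

/-- A solution of the Nesterov ODE `Ẍ + (3/t)Ẋ + ∇f(X) = 0`, `X(0) = x₀`, `Ẋ(0) = 0`:
a curve which is C¹ on `[0,∞)`, C² on `(0,∞)`, with vanishing right derivative at `0`,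
satisfying the equation for every `t > 0`. -/
def NesterovSol (n : ℕ) (f : E n → ℝ) (x0 : E n) (X : ℝ → E n) : Prop :=
  X 0 = x0 ∧
  ContDiffOn ℝ 1 X (Set.Ici 0) ∧
  ContDiffOn ℝ 2 X (Set.Ioi 0) ∧
  derivWithin X (Set.Ici 0) 0 = 0 ∧
  ∀ t > (0:ℝ), deriv (deriv X) t + (3 / t) • deriv X t + gradient f (X t) = 0

open intervalIntegral
open scoped Nat NNReal

/-!
Multiplying the equation by `t³` turns it into `(t³ Ẋ)' = -t³ ∇f(X)`. Hence a curve that is C¹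
on `[0,∞)` solves the problem exactly when it is a fixed point of the integral operator
`Ψ X (t) = x₀ - ∫₀ᵗ s⁻³ ∫₀ˢ r³ ∇f(X r) dr ds`, and regularity at `t = 0` comes from
`‖Ẋ(t)‖ ≤ t · sup ‖∇f(X)‖ / 4`. Since `∫₀ˢ r³ dr = s⁴/4`, an `L`-Lipschitz gradient gives the
Volterra estimate `‖Ψ X t - Ψ Y t‖ ≤ ∫₀ᵗ (L s / 4) sup_{[0,s]} ‖X - Y‖ ds`, so `j` iterations
shrink a distance `C` on `[0,T]` to `C (L T² / 8)ʲ / j!`. This makes the Picard iterates converge locally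
uniformly on `[0,∞)` to a fixed point, and forces any two fixed points to coincide.
-/

section Calculus

theorem integral_mul_pow_div_factorial (K C t : ℝ) (j : ℕ) :
    ∫ s in 0..t, K * s / 4 * (C * (K * s ^ 2 / 8) ^ j / j !) =
      C * (K * t ^ 2 / 8) ^ (j + 1) / (j + 1)! := by
  have h : ∀ s : ℝ, K * s / 4 * (C * (K * s ^ 2 / 8) ^ j / j !) =
      C * K ^ (j + 1) / (4 * 8 ^ j * j !) * s ^ (2 * j + 1) := by
    intro s
    rw [div_pow, mul_pow, ← pow_mul]
    field_simp
    ring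
  simp_rw [h]
  rw [integral_const_mul, integral_pow, Nat.factorial_succ, div_pow, mul_pow, ← pow_mul,
    zero_pow (by omega), sub_zero]
  push_cast
  field_simp
  ring

variable {F : Type*} [NormedAddCommGroup F] [NormedSpace ℝ F]

theorem contDiffOn_one_of_hasDerivWithinAt {f f' : ℝ → F} {s : Set ℝ}
    (hs : UniqueDiffOn ℝ s) (hf : ∀ t ∈ s, HasDerivWithinAt f (f' t) s t)
    (hf' : ContinuousOn f' s) : ContDiffOn ℝ 1 f s := by
  refine (contDiffOn_one_iff_derivWithin hs).2
    ⟨fun t ht => (hf t ht).differentiableWithinAt, hf'.congr fun t ht => ?_⟩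
  exact (hf t ht).derivWithin (hs t ht)

theorem contDiffOn_two_of_hasDerivAt {f f' f'' : ℝ → F} {s : Set ℝ} (hs : IsOpen s)
    (hf : ∀ t ∈ s, HasDerivAt f (f' t) t) (hf' : ∀ t ∈ s, HasDerivAt f' (f'' t) t)
    (hf'' : ContinuousOn f'' s) : ContDiffOn ℝ 2 f s := by
  have hC1 : ContDiffOn ℝ 1 f' s :=
    contDiffOn_one_of_hasDerivWithinAt hs.uniqueDiffOn
      (fun t ht => (hf' t ht).hasDerivWithinAt) hf''
  refine (contDiffOn_succ_iff_deriv_of_isOpen (n := 1) hs).2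
    ⟨fun t ht => (hf t ht).differentiableAt.differentiableWithinAt, by simp, ?_⟩
  exact hC1.congr fun t ht => (hf t ht).deriv

theorem norm_inv_pow_three_smul_integral_le {h : ℝ → F} {s M : ℝ} (hs : 0 ≤ s)
    (hh : ∀ r ∈ Ioc 0 s, ‖h r‖ ≤ M) :
    ‖(s ^ 3)⁻¹ • ∫ r in 0..s, r ^ 3 • h r‖ ≤ s * M / 4 := by
  rcases hs.eq_or_lt with rfl | hs
  · simp
  have hint : ‖∫ r in 0..s, r ^ 3 • h r‖ ≤ ∫ r in 0..s, r ^ 3 * M := by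
    refine norm_integral_le_of_norm_le hs.le (.of_forall fun r hr => ?_)
      (by apply Continuous.intervalIntegrable; fun_prop)
    rw [norm_smul, Real.norm_of_nonneg (pow_nonneg hr.1.le 3)]
    exact mul_le_mul_of_nonneg_left (hh r hr) (pow_nonneg hr.1.le 3)
  calc ‖(s ^ 3)⁻¹ • ∫ r in 0..s, r ^ 3 • h r‖
      = (s ^ 3)⁻¹ * ‖∫ r in 0..s, r ^ 3 • h r‖ := by
        rw [norm_smul, norm_inv, norm_pow, Real.norm_of_nonneg hs.le]
    _ ≤ (s ^ 3)⁻¹ * ∫ r in 0..s, r ^ 3 * M := by gcongr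
    _ = s * M / 4 := by
        rw [integral_mul_const, integral_pow]
        field_simp
        ring

variable [CompleteSpace F]

theorem hasDerivWithinAt_integral_Ici {h : ℝ → F} {a t : ℝ} (hh : ContinuousOn h (Ici a))
    (ht : a ≤ t) : HasDerivWithinAt (fun u => ∫ s in a..u, h s) (h t) (Ici a) t := by
  rcases ht.eq_or_lt with rfl | ht
  · exact integral_hasDerivWithinAt_right .refl
      ((hh.mono Ioi_subset_Ici_self).stronglyMeasurableAtFilter_nhdsWithin measurableSet_Ioi a)
      ((hh a self_mem_Ici).mono Ioi_subset_Ici_self)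
  · refine (integral_hasDerivAt_right ((hh.mono Icc_subset_Ici_self).intervalIntegrable_of_Icc
      ht.le) ((hh.mono Ioi_subset_Ici_self).stronglyMeasurableAtFilter isOpen_Ioi t ht)
      ((hh t ht.le).continuousAt (Ici_mem_nhds ht))).hasDerivWithinAt

end Calculus

section Nesterov

variable {F : Type*} [NormedAddCommGroup F] [NormedSpace ℝ F] (g : F → F) (x₀ : F)

/-- The velocity `Ẋ(t) = -t⁻³ ∫₀ᵗ s³ g(X s) ds` forced by `(t³ Ẋ)' = -t³ g(X)`; at `t = 0` the
junk value `0⁻¹ = 0` gives the required `Ẋ(0) = 0`. -/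
def nesterovVelocity (Y : ℝ → F) (t : ℝ) : F :=
  -(t ^ 3)⁻¹ • ∫ s in 0..t, s ^ 3 • g (Y s)

def nesterovMap (Y : ℝ → F) (t : ℝ) : F :=
  x₀ + ∫ s in 0..t, nesterovVelocity g Y s

variable {g x₀} {Y Z : ℝ → F}

@[simp]
theorem nesterovVelocity_zero : nesterovVelocity g Y 0 = 0 := by
  simp [nesterovVelocity]

@[simp]
theorem nesterovMap_zero : nesterovMap g x₀ Y 0 = x₀ := by
  simp [nesterovMap]

variable {K : ℝ≥0}

theorem norm_nesterovVelocity_sub_le (hg : LipschitzWith K g) (hY : ContinuousOn Y (Ici 0))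
    (hZ : ContinuousOn Z (Ici 0)) {s δ : ℝ} (hs : 0 ≤ s)
    (hYZ : ∀ r ∈ Ioc 0 s, ‖Y r - Z r‖ ≤ δ) :
    ‖nesterovVelocity g Y s - nesterovVelocity g Z s‖ ≤ s * (K * δ) / 4 := by
  have hint : ∀ W : ℝ → F, ContinuousOn W (Ici 0) →
      IntervalIntegrable (fun r => r ^ 3 • g (W r)) MeasureTheory.volume 0 s := fun W hW =>
    (((continuous_pow 3).continuousOn.smul (hg.continuous.comp_continuousOn hW)).mono
      Icc_subset_Ici_self).intervalIntegrable_of_Icc hs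
  have hsub : nesterovVelocity g Y s - nesterovVelocity g Z s =
      -((s ^ 3)⁻¹ • ∫ r in 0..s, r ^ 3 • (g (Y r) - g (Z r))) := by
    rw [nesterovVelocity, nesterovVelocity, ← smul_sub, ← integral_sub (hint Y hY) (hint Z hZ),
      neg_smul]
    simp_rw [smul_sub]
  rw [hsub, norm_neg]
  exact norm_inv_pow_three_smul_integral_le hs fun r hr =>
    (hg.norm_sub_le _ _).trans (mul_le_mul_of_nonneg_left (hYZ r hr) K.2)

variable [CompleteSpace F]

theorem hasDerivAt_nesterovVelocity (hg : Continuous g) (hY : ContinuousOn Y (Ici 0)) {t : ℝ}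
    (ht : 0 < t) :
    HasDerivAt (nesterovVelocity g Y) (-(3 / t) • nesterovVelocity g Y t - g (Y t)) t := by
  have hB : HasDerivAt (fun u => ∫ s in 0..u, s ^ 3 • g (Y s)) (t ^ 3 • g (Y t)) t :=
    (hasDerivWithinAt_integral_Ici ((continuous_pow 3).continuousOn.smul
      (hg.comp_continuousOn hY)) ht.le).hasDerivAt (Ici_mem_nhds ht)
  have hc : HasDerivAt (fun u : ℝ => -(u ^ 3)⁻¹) (3 * t ^ 2 / (t ^ 3) ^ 2) t :=
    ((hasDerivAt_pow 3 t).inv (by positivity)).neg.congr_deriv (by norm_num [neg_div])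
  refine (hc.smul hB).congr_deriv ?_
  simp only [nesterovVelocity]
  match_scalars <;> field_simp

theorem continuousOn_nesterovVelocity (hg : Continuous g) (hY : ContinuousOn Y (Ici 0)) :
    ContinuousOn (nesterovVelocity g Y) (Ici 0) := by
  intro t ht
  rcases (show (0 : ℝ) ≤ t from ht).eq_or_lt with rfl | ht
  · obtain ⟨M, hM⟩ := isCompact_Icc.exists_bound_of_continuousOn
      (hg.comp_continuousOn (hY.mono Icc_subset_Ici_self : ContinuousOn Y (Icc 0 1)))
    have hbound : ∀ s ∈ Icc (0 : ℝ) 1, ‖nesterovVelocity g Y s‖ ≤ s * M / 4 := by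
      intro s hs
      rw [nesterovVelocity, neg_smul, norm_neg]
      exact norm_inv_pow_three_smul_integral_le hs.1 fun r hr => hM r ⟨hr.1.le, hr.2.trans hs.2⟩
    rw [ContinuousWithinAt, nesterovVelocity_zero]
    refine squeeze_zero_norm' ?_ (tendsto_nhdsWithin_of_tendsto_nhds
      (by simpa using (continuous_mul_const M |>.div_const 4).tendsto 0))
    filter_upwards [Icc_mem_nhdsGE zero_lt_one] with s hs using hbound s hs
  · exact (hasDerivAt_nesterovVelocity hg hY ht).continuousAt.continuousWithinAt

theorem hasDerivWithinAt_nesterovMap (hg : Continuous g) (hY : ContinuousOn Y (Ici 0)) {t : ℝ}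
    (ht : 0 ≤ t) :
    HasDerivWithinAt (nesterovMap g x₀ Y) (nesterovVelocity g Y t) (Ici 0) t :=
  (hasDerivWithinAt_integral_Ici (continuousOn_nesterovVelocity hg hY) ht).const_add x₀

theorem continuousOn_nesterovMap (hg : Continuous g) (hY : ContinuousOn Y (Ici 0)) :
    ContinuousOn (nesterovMap g x₀ Y) (Ici 0) :=
  fun _ ht => (hasDerivWithinAt_nesterovMap hg hY ht).continuousWithinAt

variable (g x₀) in
/-- `NesterovSol n f x₀` unfolds to `IsNesterovSolution (gradient f) x₀`. -/
def IsNesterovSolution (X : ℝ → F) : Prop :=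
  X 0 = x₀ ∧ ContDiffOn ℝ 1 X (Ici 0) ∧ ContDiffOn ℝ 2 X (Ioi 0) ∧
    derivWithin X (Ici 0) 0 = 0 ∧
    ∀ t > (0 : ℝ), deriv (deriv X) t + (3 / t) • deriv X t + g (X t) = 0

theorem isNesterovSolution_of_eqOn (hg : Continuous g) {X : ℝ → F} (hX : ContinuousOn X (Ici 0))
    (hfix : EqOn (nesterovMap g x₀ X) X (Ici 0)) : IsNesterovSolution g x₀ X := by
  have hV := continuousOn_nesterovVelocity hg hX
  have hXV : ∀ t ∈ Ici 0, HasDerivWithinAt X (nesterovVelocity g X t) (Ici 0) t := fun t ht =>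
    (hasDerivWithinAt_nesterovMap hg hX ht).congr (fun s hs => (hfix hs).symm) (hfix ht).symm
  have hXV' : ∀ t ∈ Ioi 0, HasDerivAt X (nesterovVelocity g X t) t := fun t ht =>
    (hXV t (Ioi_subset_Ici_self ht)).hasDerivAt (Ici_mem_nhds ht)
  have hVA : ∀ t ∈ Ioi 0, HasDerivAt (nesterovVelocity g X)
      (-(3 / t) • nesterovVelocity g X t - g (X t)) t := fun t ht =>
    hasDerivAt_nesterovVelocity hg hX ht
  have hA : ContinuousOn (fun t => -(3 / t) • nesterovVelocity g X t - g (X t)) (Ioi 0) :=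
    ((continuousOn_const.div continuousOn_id fun t ht => ht.ne').neg.smul
      (hV.mono Ioi_subset_Ici_self)).sub (hg.comp_continuousOn (hX.mono Ioi_subset_Ici_self))
  refine ⟨(hfix self_mem_Ici).symm.trans nesterovMap_zero,
    contDiffOn_one_of_hasDerivWithinAt (uniqueDiffOn_Ici 0) hXV hV,
    contDiffOn_two_of_hasDerivAt isOpen_Ioi hXV' hVA hA, ?_, fun t ht => ?_⟩
  · rw [(hXV 0 self_mem_Ici).derivWithin (uniqueDiffOn_Ici 0 0 self_mem_Ici),
      nesterovVelocity_zero]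
  · have hderiv : deriv X =ᶠ[𝓝 t] nesterovVelocity g X :=
      Filter.eventually_of_mem (Ioi_mem_nhds ht) fun s hs => (hXV' s hs).deriv
    rw [hderiv.deriv_eq, (hVA t ht).deriv, (hXV' t ht).deriv, neg_smul]
    abel

namespace IsNesterovSolution

variable {X : ℝ → F}

theorem hasDerivAt_nesterovVelocity (hg : Continuous g) (hX : IsNesterovSolution g x₀ X) {t : ℝ}
    (ht : 0 < t) : HasDerivAt X (nesterovVelocity g X t) t := by
  obtain ⟨-, hC1, hC2, -, hode⟩ := hX
  set DX := derivWithin X (Ici 0)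
  have hDX : ContinuousOn DX (Ici 0) := hC1.continuousOn_derivWithin (uniqueDiffOn_Ici 0) le_rfl
  have hDX_eq : ∀ s > 0, DX s = deriv X s := fun s hs => derivWithin_of_mem_nhds (Ici_mem_nhds hs)
  have hX' : ∀ s > 0, HasDerivAt X (deriv X s) s := fun s hs =>
    ((hC2.differentiableOn (by norm_num)) s hs).differentiableAt (Ioi_mem_nhds hs) |>.hasDerivAt
  have hX'' : ∀ s > 0, HasDerivAt (deriv X) (deriv (deriv X) s) s := fun s hs =>
    (((hC2.deriv_of_isOpen isOpen_Ioi (by norm_num)).differentiableOn one_ne_zero) s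
      hs).differentiableAt (Ioi_mem_nhds hs) |>.hasDerivAt
  have hW : ∀ s ∈ Ioo 0 t, HasDerivAt (fun u => u ^ 3 • DX u) (-(s ^ 3 • g (X s))) s := by
    intro s hs
    have hDX_ev : (fun u => u ^ 3 • DX u) =ᶠ[𝓝 s] fun u => u ^ 3 • deriv X u :=
      Filter.eventually_of_mem (Ioi_mem_nhds hs.1) fun u hu => by simp only [hDX_eq u hu]
    refine (((hasDerivAt_pow 3 s).smul (hX'' s hs.1)).congr_of_eventuallyEq hDX_ev).congr_deriv ?_
    linear_combination (norm := skip) s ^ 3 • hode s hs.1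
    match_scalars <;> field_simp <;> ring
  have hFTC := integral_eq_sub_of_hasDerivAt_of_le ht.le
    (((continuous_pow 3).continuousOn.smul hDX).mono Icc_subset_Ici_self) hW
    ((((continuous_pow 3).continuousOn.smul (hg.comp_continuousOn hC1.continuousOn)).neg.mono
      Icc_subset_Ici_self).intervalIntegrable_of_Icc ht.le)
  have hV : deriv X t = nesterovVelocity g X t := by
    rw [← hDX_eq t ht, nesterovVelocity, neg_smul, ← smul_neg,
      eq_inv_smul_iff₀ (by positivity), ← integral_neg, hFTC]
    simp
  exact hV ▸ hX' t ht

theorem eqOn_nesterovMap (hg : Continuous g) (hX : IsNesterovSolution g x₀ X) :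
    EqOn (nesterovMap g x₀ X) X (Ici 0) := by
  intro t ht
  have hXc : ContinuousOn X (Ici 0) := hX.2.1.continuousOn
  rw [nesterovMap, integral_eq_sub_of_hasDerivAt_of_le ht (hXc.mono Icc_subset_Ici_self)
    (fun s hs => hX.hasDerivAt_nesterovVelocity hg hs.1)
    (((continuousOn_nesterovVelocity hg hXc).mono Icc_subset_Ici_self).intervalIntegrable_of_Icc
      ht), hX.1, add_sub_cancel]

end IsNesterovSolution

theorem norm_nesterovMap_sub_le (hg : LipschitzWith K g) (hY : ContinuousOn Y (Ici 0))
    (hZ : ContinuousOn Z (Ici 0)) {t C : ℝ} (ht : 0 ≤ t) (hC : 0 ≤ C) {j : ℕ}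
    (hYZ : ∀ s ∈ Icc 0 t, ‖Y s - Z s‖ ≤ C * (K * s ^ 2 / 8) ^ j / j !) :
    ‖nesterovMap g x₀ Y t - nesterovMap g x₀ Z t‖ ≤
      C * (K * t ^ 2 / 8) ^ (j + 1) / (j + 1)! := by
  have hint : ∀ W : ℝ → F, ContinuousOn W (Ici 0) →
      IntervalIntegrable (nesterovVelocity g W) MeasureTheory.volume 0 t := fun W hW =>
    ((continuousOn_nesterovVelocity hg.continuous hW).mono
      Icc_subset_Ici_self).intervalIntegrable_of_Icc ht
  have hV : ∀ s ∈ Ioc 0 t, ‖nesterovVelocity g Y s - nesterovVelocity g Z s‖ ≤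
      K * s / 4 * (C * (K * s ^ 2 / 8) ^ j / j !) := by
    intro s hs
    refine (norm_nesterovVelocity_sub_le (δ := C * (K * s ^ 2 / 8) ^ j / j !) hg hY hZ hs.1.le
      fun r hr => ?_).trans_eq (by ring)
    refine (hYZ r ⟨hr.1.le, hr.2.trans hs.2⟩).trans ?_
    gcongr
    exacts [hr.1.le, hr.2]
  rw [nesterovMap, nesterovMap, add_sub_add_left_eq_sub, ← integral_sub (hint Y hY) (hint Z hZ),
    ← integral_mul_pow_div_factorial]
  exact norm_integral_le_of_norm_le ht (.of_forall hV)
    (by apply Continuous.intervalIntegrable; fun_prop)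

theorem tendsto_nesterovMap_of_tendstoUniformlyOn (hg : LipschitzWith K g) {Ys : ℕ → ℝ → F}
    (hYs : ∀ N, ContinuousOn (Ys N) (Ici 0)) (hY : ContinuousOn Y (Ici 0)) {t : ℝ}
    (ht : 0 ≤ t) (hlim : TendstoUniformlyOn Ys Y atTop (Icc 0 t)) :
    Tendsto (fun N => nesterovMap g x₀ (Ys N) t) atTop (𝓝 (nesterovMap g x₀ Y t)) := by
  rw [Metric.tendsto_nhds]
  intro ε hε
  have hc : 0 < K * t ^ 2 / 8 + 1 := by positivity
  filter_upwards [Metric.tendstoUniformlyOn_iff.1 hlim (ε / (K * t ^ 2 / 8 + 1)) (by positivity)]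
    with N hN
  have hbound := norm_nesterovMap_sub_le (x₀ := x₀) (j := 0) hg (hYs N) hY ht
    (div_pos hε hc).le fun s hs => by simpa [dist_eq_norm'] using (hN s hs).le
  rw [dist_eq_norm]
  refine hbound.trans_lt ?_
  rw [zero_add, pow_one, Nat.factorial_one, Nat.cast_one, div_one, div_mul_eq_mul_div,
    div_lt_iff₀ hc]
  nlinarith

theorem norm_sub_le_of_nesterovMap_iterates (hg : LipschitzWith K g) {Y Z : ℕ → ℝ → F}
    (hY : ∀ j, ContinuousOn (Y j) (Ici 0)) (hZ : ∀ j, ContinuousOn (Z j) (Ici 0)) {T C : ℝ}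
    (hC : 0 ≤ C) (hYs : ∀ j, EqOn (Y (j + 1)) (nesterovMap g x₀ (Y j)) (Icc 0 T))
    (hZs : ∀ j, EqOn (Z (j + 1)) (nesterovMap g x₀ (Z j)) (Icc 0 T))
    (h0 : ∀ s ∈ Icc 0 T, ‖Y 0 s - Z 0 s‖ ≤ C) (j : ℕ) :
    ∀ s ∈ Icc 0 T, ‖Y j s - Z j s‖ ≤ C * (K * s ^ 2 / 8) ^ j / j ! := by
  induction j with
  | zero => simpa using h0
  | succ j ih =>
    intro s hs
    rw [hYs j hs, hZs j hs]
    exact norm_nesterovMap_sub_le hg (hY j) (hZ j) hs.1 hC fun r hr =>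
      ih r ⟨hr.1, hr.2.trans hs.2⟩

theorem eqOn_of_eqOn_nesterovMap (hg : LipschitzWith K g) {X X' : ℝ → F}
    (hX : ContinuousOn X (Ici 0)) (hX' : ContinuousOn X' (Ici 0))
    (hfix : EqOn (nesterovMap g x₀ X) X (Ici 0))
    (hfix' : EqOn (nesterovMap g x₀ X') X' (Ici 0)) :
    EqOn X X' (Ici 0) := by
  intro T hT
  obtain ⟨C, hC⟩ := isCompact_Icc.exists_bound_of_continuousOn
    ((hX.sub hX').mono Icc_subset_Ici_self : ContinuousOn (X - X') (Icc 0 T))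
  have hbound := fun j => norm_sub_le_of_nesterovMap_iterates (Y := fun _ => X) (Z := fun _ => X')
    hg (fun _ => hX) (fun _ => hX') ((norm_nonneg _).trans (hC T ⟨hT, le_rfl⟩))
    (fun _ _ hs => (hfix hs.1).symm) (fun _ _ hs => (hfix' hs.1).symm) hC j T ⟨hT, le_rfl⟩
  have hlim : Tendsto (fun j => C * (K * T ^ 2 / 8) ^ j / j !) atTop (𝓝 0) := by
    have := (FloorSemiring.tendsto_pow_div_factorial_atTop (K * T ^ 2 / 8)).const_mul C
    rw [mul_zero] at this
    exact this.congr fun j => (mul_div_assoc _ _ _).symm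
  exact sub_eq_zero.1 (norm_le_zero_iff.1 (ge_of_tendsto' hlim hbound))

theorem continuousOn_iterate_nesterovMap (hg : Continuous g) (j : ℕ) :
    ContinuousOn ((nesterovMap g x₀)^[j] fun _ => x₀) (Ici 0) := by
  induction j with
  | zero => exact continuousOn_const
  | succ j ih =>
    rw [Function.iterate_succ_apply']
    exact continuousOn_nesterovMap hg ih

theorem exists_tendstoUniformlyOn_iterate_nesterovMap (hg : LipschitzWith K g) (x₀ : F) :
    ∃ X : ℝ → F, ∀ T,
      TendstoUniformlyOn (fun j => (nesterovMap g x₀)^[j] fun _ => x₀) X atTop (Icc 0 T) := by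
  set P : ℕ → ℝ → F := fun j => (nesterovMap g x₀)^[j] fun _ => x₀
  have hPc : ∀ j, ContinuousOn (P j) (Ici 0) := continuousOn_iterate_nesterovMap hg.continuous
  have hPs : ∀ j, P (j + 1) = nesterovMap g x₀ (P j) := fun j =>
    Function.iterate_succ_apply' _ _ _
  refine ⟨fun t => x₀ + ∑' j, (P (j + 1) t - P j t), fun T => ?_⟩
  obtain ⟨C, hC⟩ := isCompact_Icc.exists_bound_of_continuousOn
    (((hPc 1).sub (hPc 0)).mono Icc_subset_Ici_self : ContinuousOn (P 1 - P 0) (Icc 0 T))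
  have hbound : ∀ j, ∀ s ∈ Icc 0 T,
      ‖P (j + 1) s - P j s‖ ≤ max C 0 * (K * T ^ 2 / 8) ^ j / j ! := by
    intro j s hs
    refine (norm_sub_le_of_nesterovMap_iterates (Y := fun j => P (j + 1)) hg (fun j => hPc _) hPc
      (le_max_right _ _) (fun j _ _ => by rw [hPs]) (fun j _ _ => by rw [hPs])
      (fun s hs => (hC s hs).trans (le_max_left _ _)) j s hs).trans ?_
    gcongr
    exacts [hs.1, hs.2]
  have hsummable : Summable fun j : ℕ => max C 0 * (K * T ^ 2 / 8) ^ j / j ! :=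
    ((Real.summable_pow_div_factorial _).mul_left (max C 0)).congr fun j =>
      (mul_div_assoc _ _ _).symm
  have hsum := tendstoUniformlyOn_tsum_nat hsummable hbound
  refine ((tendsto_const_nhds (x := x₀)).tendstoUniformlyOn_const (Icc 0 T) |>.add hsum).congr
    (.of_forall fun N s _ => ?_)
  change x₀ + ∑ j ∈ Finset.range N, (P (j + 1) s - P j s) = P N s
  rw [Finset.sum_range_sub (fun j => P j s)]
  exact add_sub_cancel x₀ (P N s)

theorem exists_eqOn_nesterovMap (hg : LipschitzWith K g) (x₀ : F) :
    ∃ X : ℝ → F, ContinuousOn X (Ici 0) ∧ EqOn (nesterovMap g x₀ X) X (Ici 0) := by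
  obtain ⟨X, hX⟩ := exists_tendstoUniformlyOn_iterate_nesterovMap hg x₀
  have hPc := continuousOn_iterate_nesterovMap hg.continuous (x₀ := x₀)
  have hXc : ContinuousOn X (Ici 0) := by
    refine (tendstoLocallyUniformlyOn_of_forall_exists_nhds fun t _ =>
      ⟨Icc 0 (t + 1), ?_, hX _⟩).continuousOn (.of_forall hPc)
    rw [← Ici_inter_Iic]
    exact inter_mem_nhdsWithin _ (Iic_mem_nhds (lt_add_one t))
  refine ⟨X, hXc, fun t ht => tendsto_nhds_unique ?_
    (((hX t).tendsto_at ⟨ht, le_rfl⟩).comp (tendsto_add_atTop_nat 1))⟩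
  simpa only [Function.comp_def, Function.iterate_succ_apply'] using
    tendsto_nesterovMap_of_tendstoUniformlyOn hg hPc hXc ht (hX t)

theorem exists_isNesterovSolution (hg : LipschitzWith K g) (x₀ : F) :
    ∃ X, IsNesterovSolution g x₀ X :=
  let ⟨X, hXc, hfix⟩ := exists_eqOn_nesterovMap hg x₀
  ⟨X, isNesterovSolution_of_eqOn hg.continuous hXc hfix⟩

theorem IsNesterovSolution.eqOn (hg : LipschitzWith K g) {X Y : ℝ → F}
    (hX : IsNesterovSolution g x₀ X) (hY : IsNesterovSolution g x₀ Y) : EqOn X Y (Ici 0) :=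
  eqOn_of_eqOn_nesterovMap hg hX.2.1.continuousOn hY.2.1.continuousOn
    (hX.eqOn_nesterovMap hg.continuous) (hY.eqOn_nesterovMap hg.continuous)

end Nesterov

theorem nesterov_ode_exists_unique_general (n : ℕ) (L : ℝ) (f : E n → ℝ)
    (hf : MemFL n L f) (x0 : E n) :
    (∃ X : ℝ → E n, NesterovSol n f x0 X) ∧
      ∀ X Y : ℝ → E n, NesterovSol n f x0 X → NesterovSol n f x0 Y →
        Set.EqOn X Y (Set.Ici 0) := by
  have hg : LipschitzWith (Real.toNNReal L) (gradient f) :=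
    LipschitzWith.of_dist_le' fun x y => by simpa only [dist_eq_norm] using hf.2.2 x y
  exact ⟨exists_isNesterovSolution hg x0, fun X Y hX hY => IsNesterovSolution.eqOn hg hX hY⟩

/-- **Theorem 1 (existence and uniqueness).** For any `f ∈ F_L` (`L > 0`) and any starting
point `x₀`, the ODE `Ẍ + (3/t)Ẋ + ∇f(X) = 0`, `X(0) = x₀`, `Ẋ(0) = 0` has a unique global
solution, C² on `(0,∞)` and C¹ on `[0,∞)`. -/
theorem nesterov_ode_exists_unique (n : ℕ) (L : ℝ) (hL : 0 < L) (f : E n → ℝ)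
    (hf : MemFL n L f) (x0 : E n) :
    (∃ X : ℝ → E n, NesterovSol n f x0 X) ∧
      ∀ X Y : ℝ → E n, NesterovSol n f x0 X → NesterovSol n f x0 Y →
        Set.EqOn X Y (Set.Ici 0) :=
  nesterov_ode_exists_unique_general n L f hf x0
end
end

section
/- Let f ∈ F_∞ and let X be the solution to the ODE Ẍ + (3/t)Ẋ + ∇f(X) = 0 with X(0) = x₀, Ẋ(0) = 0. For each step size s > 0, let (x_k^{(s)}) be Nesterov's iterates starting from x₀. Then for every fixed T > 0, the maximum over 0 ≤ k ≤ T/√s of ‖x_k^{(s)} − X(k√s)‖ tends to 0 as s → 0⁺; that is, for every ε > 0 there exists s₀ > 0 such that for all 0 < s < s₀ and all integers 0 ≤ k ≤ T/√s, ‖x_k^{(s)} − X(k√s)‖ ≤ ε. -/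
open Set Filter Topology

noncomputable section

/-- `F_∞ = ∪_{L>0} F_L`. -/
def MemFInf (n : ℕ) (f : E n → ℝ) : Prop := ∃ L > 0, MemFL n L f

/-- Nesterov's scheme with step size `s` starting from `x₀`:
`y₀ = x₀`, and for `k ≥ 1`, `x_k = y_{k-1} - s ∇f(y_{k-1})`,
`y_k = x_k + ((k-1)/(k+2)) (x_k - x_{k-1})`. -/
def NesterovIter (n : ℕ) (f : E n → ℝ) (s : ℝ) (x0 : E n) (x y : ℕ → E n) : Prop :=
  x 0 = x0 ∧ y 0 = x0 ∧
  ∀ k : ℕ,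
    x (k + 1) = y k - s • gradient f (y k) ∧
    y (k + 1) = x (k + 1) + ((k : ℝ) / ((k : ℝ) + 3)) • (x (k + 1) - x k)

/-!
Write `h = √s` and compare `x_k` with the samples `z_k = X(k h)`. The error `e_k = x_k - z_k`
obeys the momentum recursion forced by the defect `r_k` left when `z` is substituted into the
scheme. As `∇f` is `L`-Lipschitz and the momentum coefficients lie in `[-1, 1]`, the quantity
`h ‖e_k‖ + ‖e_k - e_{k-1}‖` grows per step by at most the factor `1 + (1 + 2L) h` plus
`O(h³ + ‖r_k‖)`, so discrete Grönwall gives `‖e_k‖ ≤ e^{(1+2L)T} O(h + Σ ‖r_k‖ / h)` while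
`k h ≤ T` (stability).

Along the ODE, `(t³ Ẋ)' = -t³ ∇f(X)` bounds `‖Ẋ(t)‖` by `t sup ‖∇f(X)‖` and hence `Ẍ` on `[0, T]`.
Taylor expansion then gives `‖r_k‖ = O(h²)`, and `‖r_k‖ ≤ (2η + O(h / δ)) h²` once `k h ≥ δ`,
where `η` is the oscillation of the uniformly continuous `Ẍ` on `[δ / 2, T]` over windows of
width `2h`. Hence `Σ_{k h ≤ T} ‖r_k‖ / h = o(1)` (consistency), and the two estimates combine.
-/

section

variable {V : Type*} [NormedAddCommGroup V] [NormedSpace ℝ V]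

theorem norm_sub_le_of_hasDerivAt_Ioo {f f' : ℝ → V} {a b C : ℝ} (hab : a ≤ b)
    (hf : ContinuousOn f (Icc a b)) (hf' : ∀ x ∈ Ioo a b, HasDerivAt f (f' x) x)
    (bound : ∀ x ∈ Ioo a b, ‖f' x‖ ≤ C) : ‖f b - f a‖ ≤ C * (b - a) := by
  rcases hab.eq_or_lt with rfl | hab
  · simp
  have inner : ∀ a' ∈ Ioo a b, ‖f b - f a'‖ ≤ C * (b - a') := fun a' ha' =>
    norm_image_sub_le_of_norm_deriv_right_le_segment (hf.mono (Icc_subset_Icc_left ha'.1.le))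
      (fun x hx => (hf' x ⟨ha'.1.trans_le hx.1, hx.2⟩).hasDerivWithinAt)
      (fun x hx => bound x ⟨ha'.1.trans_le hx.1, hx.2⟩) b (right_mem_Icc.2 ha'.2.le)
  have hlim : Tendsto f (𝓝[>] a) (𝓝 (f a)) := by
    rw [← nhdsWithin_Ioo_eq_nhdsGT hab]
    exact ((hf a (left_mem_Icc.2 hab.le)).mono Ioo_subset_Icc_self).tendsto
  refine le_of_tendsto_of_tendsto ((tendsto_const_nhds.sub hlim).norm)
    ((tendsto_const_nhds.mul (tendsto_const_nhds.sub tendsto_id)).mono_left nhdsWithin_le_nhds) ?_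
  filter_upwards [Ioo_mem_nhdsGT hab] using inner

theorem norm_first_order_remainder_le {f f' : ℝ → V} {t u η : ℝ}
    (hf : ∀ w ∈ uIcc t u, HasDerivWithinAt f (f' w) (uIcc t u) w)
    (hη : ∀ w ∈ uIcc t u, ‖f' w - f' t‖ ≤ η) :
    ‖f u - f t - (u - t) • f' t‖ ≤ η * |u - t| := by
  have hderiv : ∀ w ∈ uIcc t u,
      HasDerivWithinAt (fun w => f w - (w - t) • f' t) (f' w - f' t) (uIcc t u) w := by
    intro w hw
    exact (hf w hw).fun_sub
      ((((hasDerivAt_id w).sub_const t).smul_const (f' t)).hasDerivWithinAt.congr_deriv (by simp))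
  have := Convex.norm_image_sub_le_of_norm_hasDerivWithin_le hderiv hη (convex_uIcc t u)
    left_mem_uIcc right_mem_uIcc
  simpa [Real.norm_eq_abs, sub_right_comm] using this

theorem norm_second_order_remainder_le {f f' f'' : ℝ → V} {t u η : ℝ}
    (hf : ∀ w ∈ uIcc t u, HasDerivAt f (f' w) w) (hf' : ∀ w ∈ uIcc t u, HasDerivAt f' (f'' w) w)
    (hη : ∀ w ∈ uIcc t u, ‖f'' w - f'' t‖ ≤ η) :
    ‖f u - f t - (u - t) • f' t - ((u - t) ^ 2 / 2) • f'' t‖ ≤ η * (u - t) ^ 2 := by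
  have hderiv : ∀ w ∈ uIcc t u, HasDerivWithinAt
      (fun w => f w - (w - t) • f' t - ((w - t) ^ 2 / 2) • f'' t)
      (f' w - f' t - (w - t) • f'' t) (uIcc t u) w := by
    intro w hw
    have hsq : HasDerivAt (fun w : ℝ => (w - t) ^ 2 / 2) (w - t) w := by
      simpa using (((hasDerivAt_id w).sub_const t).pow 2).div_const 2
    exact (((hf w hw).fun_sub (((hasDerivAt_id w).sub_const t).smul_const (f' t)) |>.congr_deriv
      (by simp)).fun_sub (hsq.smul_const (f'' t))).hasDerivWithinAt
  have hbound : ∀ w ∈ uIcc t u, ‖f' w - f' t - (w - t) • f'' t‖ ≤ η * |u - t| := by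
    intro w hw
    have hsub := uIcc_subset_uIcc_left hw
    calc ‖f' w - f' t - (w - t) • f'' t‖ ≤ η * |w - t| :=
          norm_first_order_remainder_le (fun v hv => (hf' v (hsub hv)).hasDerivWithinAt)
            (fun v hv => hη v (hsub hv))
      _ ≤ η * |u - t| := by
          have hη0 : 0 ≤ η := (norm_nonneg _).trans (hη t left_mem_uIcc)
          exact mul_le_mul_of_nonneg_left (abs_sub_left_of_mem_uIcc hw) hη0
  have := Convex.norm_image_sub_le_of_norm_hasDerivWithin_le hderiv hbound (convex_uIcc t u)
    left_mem_uIcc right_mem_uIcc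
  simp only [sub_self, zero_smul, sub_zero, ne_eq, OfNat.ofNat_ne_zero, not_false_eq_true,
    zero_pow, zero_div] at this
  rw [Real.norm_eq_abs, mul_assoc, abs_mul_abs_self, ← sq] at this
  simpa [sub_right_comm _ (f t)] using this

theorem sum_range_le_of_le_ite {ρ : ℕ → ℝ} {a b h δ : ℝ} {k : ℕ} (hh : 0 < h) (hδ : 0 ≤ δ)
    (ha : 0 ≤ a) (hb : 0 ≤ b) (hρ : ∀ m < k, ρ m ≤ if (m : ℝ) * h < δ then a else b) :
    ∑ m ∈ Finset.range k, ρ m ≤ (δ / h + 1) * a + k * b := by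
  set S := (Finset.range k).filter fun m : ℕ => (m : ℝ) * h < δ
  have hcard : (S.card : ℝ) ≤ δ / h + 1 := by
    have hsub : S ⊆ Finset.range ⌈δ / h⌉₊ := fun m hm => by
      rw [Finset.mem_filter] at hm
      rw [Finset.mem_range, ← Nat.cast_lt (α := ℝ)]
      exact ((lt_div_iff₀ hh).2 hm.2).trans_le (Nat.le_ceil _)
    calc (S.card : ℝ) ≤ ⌈δ / h⌉₊ := by
          exact_mod_cast (Finset.card_le_card hsub).trans_eq (Finset.card_range _)
      _ ≤ δ / h + 1 := (Nat.ceil_lt_add_one (by positivity)).le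
  calc ∑ m ∈ Finset.range k, ρ m
      ≤ ∑ m ∈ Finset.range k, ((if (m : ℝ) * h < δ then a else 0) + b) :=
        Finset.sum_le_sum fun m hm =>
          (hρ m (Finset.mem_range.1 hm)).trans (by split_ifs <;> linarith)
    _ = S.card * a + k * b := by
        rw [Finset.sum_add_distrib, ← Finset.sum_filter, Finset.sum_const, Finset.sum_const,
          Finset.card_range, nsmul_eq_mul, nsmul_eq_mul]
    _ ≤ (δ / h + 1) * a + k * b := by gcongr

def nesterovAccel (g X' : ℝ → V) (t : ℝ) : V := -(3 / t) • X' t - g t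

/-- The Nesterov ODE `Ẍ + (3/t) Ẋ + g = 0`, with the velocity `X'` made explicit and the force
`g = ∇f ∘ X` abstracted. -/
structure IsNesterovPath (g X X' : ℝ → V) : Prop where
  hasDerivWithinAt : ∀ t, 0 ≤ t → HasDerivWithinAt X (X' t) (Ici 0) t
  velocity_zero : X' 0 = 0
  continuousOn_velocity : ContinuousOn X' (Ici 0)
  hasDerivAt_velocity : ∀ t, 0 < t → HasDerivAt X' (nesterovAccel g X' t) t
  continuousOn_force : ContinuousOn g (Ici 0)

namespace IsNesterovPath

variable {g X X' : ℝ → V} {G T t : ℝ}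

theorem exists_norm_force_le (hP : IsNesterovPath g X X') (T : ℝ) :
    ∃ G, ∀ u ∈ Icc 0 T, ‖g u‖ ≤ G :=
  isCompact_Icc.exists_bound_of_continuousOn (hP.continuousOn_force.mono Icc_subset_Ici_self)

theorem continuousOn_accel (hP : IsNesterovPath g X X') :
    ContinuousOn (nesterovAccel g X') (Ioi 0) := by
  have hcoef : ContinuousOn (fun t : ℝ => -(3 / t)) (Ioi 0) :=
    (continuousOn_const.div continuousOn_id fun u hu => ne_of_gt hu).neg
  exact (hcoef.smul (hP.continuousOn_velocity.mono Ioi_subset_Ici_self)).sub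
    (hP.continuousOn_force.mono Ioi_subset_Ici_self)

/-- `t³ Ẋ(t)` has derivative `-t³ g(t)`. -/
theorem norm_velocity_le (hP : IsNesterovPath g X X') (hG : ∀ u ∈ Icc 0 t, ‖g u‖ ≤ G)
    (ht : 0 ≤ t) : ‖X' t‖ ≤ G * t := by
  rcases ht.eq_or_lt with rfl | ht
  · simp [hP.velocity_zero]
  have hG0 : 0 ≤ G := (norm_nonneg _).trans (hG 0 ⟨le_rfl, ht.le⟩)
  have hderiv : ∀ u ∈ Ioo 0 t, HasDerivAt (fun u => u ^ 3 • X' u) (-(u ^ 3) • g u) u := by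
    intro u hu
    have hu0 : u ≠ 0 := hu.1.ne'
    have hcube : HasDerivAt (fun u : ℝ => u ^ 3) (3 * u ^ 2) u := by
      simpa using hasDerivAt_pow 3 u
    convert hcube.fun_smul (hP.hasDerivAt_velocity u hu.1) using 1
    simp only [nesterovAccel, smul_sub, smul_smul]
    match_scalars
    · ring
    · field_simp
      ring
  have hcont : ContinuousOn (fun u => u ^ 3 • X' u) (Icc 0 t) :=
    (continuousOn_pow 3).smul (hP.continuousOn_velocity.mono Icc_subset_Ici_self)
  have hbound : ∀ u ∈ Ioo 0 t, ‖-(u ^ 3) • g u‖ ≤ G * t ^ 3 := by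
    intro u hu
    rw [norm_smul, norm_neg, norm_pow, Real.norm_of_nonneg hu.1.le, mul_comm]
    exact mul_le_mul (hG u (Ioo_subset_Icc_self hu)) (pow_le_pow_left₀ hu.1.le hu.2.le 3)
      (pow_nonneg hu.1.le 3) hG0
  have key := norm_sub_le_of_hasDerivAt_Ioo ht.le hcont hderiv hbound
  rw [hP.velocity_zero, smul_zero, sub_zero, norm_smul, norm_pow, Real.norm_of_nonneg ht.le,
    sub_zero] at key
  nlinarith [pow_pos ht 3, norm_nonneg (X' t)]

theorem norm_accel_le (hP : IsNesterovPath g X X') (hG : ∀ u ∈ Icc 0 T, ‖g u‖ ≤ G)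
    (ht : 0 < t) (htT : t ≤ T) : ‖nesterovAccel g X' t‖ ≤ 4 * G := by
  have hv := hP.norm_velocity_le (fun u hu => hG u ⟨hu.1, hu.2.trans htT⟩) ht.le
  have hg := hG t ⟨ht.le, htT⟩
  calc ‖nesterovAccel g X' t‖ ≤ 3 / t * ‖X' t‖ + ‖g t‖ := by
        unfold nesterovAccel
        refine (norm_sub_le _ _).trans ?_
        rw [norm_smul, Real.norm_eq_abs, abs_neg, abs_of_pos (by positivity)]
    _ ≤ 3 / t * (G * t) + G := by gcongr
    _ = 4 * G := by field_simp; ring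

theorem norm_velocity_sub_le (hP : IsNesterovPath g X X') (hG : ∀ u ∈ Icc 0 T, ‖g u‖ ≤ G)
    {a b : ℝ} (ha : a ∈ Icc 0 T) (hb : b ∈ Icc 0 T) : ‖X' b - X' a‖ ≤ 4 * G * |b - a| := by
  wlog hab : a ≤ b generalizing a b
  · rw [norm_sub_rev, abs_sub_comm]
    exact this hb ha (le_of_not_ge hab)
  rw [abs_of_nonneg (sub_nonneg.2 hab)]
  exact norm_sub_le_of_hasDerivAt_Ioo hab
    (hP.continuousOn_velocity.mono fun u hu => ha.1.trans hu.1)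
    (fun u hu => hP.hasDerivAt_velocity u (ha.1.trans_lt hu.1))
    (fun u hu => hP.norm_accel_le hG (ha.1.trans_lt hu.1) (hu.2.le.trans hb.2))

theorem norm_sub_le_mul_sub (hP : IsNesterovPath g X X') (hG : ∀ u ∈ Icc 0 T, ‖g u‖ ≤ G)
    {a b : ℝ} (ha : 0 ≤ a) (hab : a ≤ b) (hb : b ≤ T) : ‖X b - X a‖ ≤ G * T * (b - a) := by
  have hG0 : 0 ≤ G := (norm_nonneg _).trans (hG 0 ⟨le_rfl, ha.trans (hab.trans hb)⟩)
  have hderiv : ∀ u ∈ Icc a b, HasDerivWithinAt X (X' u) (Icc a b) u := fun u hu =>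
    (hP.hasDerivWithinAt u (ha.trans hu.1)).mono fun v hv => ha.trans hv.1
  have hbound : ∀ u ∈ Icc a b, ‖X' u‖ ≤ G * T := fun u hu =>
    (hP.norm_velocity_le (fun v hv => hG v ⟨hv.1, hv.2.trans (hu.2.trans hb)⟩)
      (ha.trans hu.1)).trans (mul_le_mul_of_nonneg_left (hu.2.trans hb) hG0)
  have := Convex.norm_image_sub_le_of_norm_hasDerivWithin_le hderiv hbound (convex_Icc a b)
    (left_mem_Icc.2 hab) (right_mem_Icc.2 hab)
  rwa [Real.norm_of_nonneg (sub_nonneg.2 hab)] at this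

theorem norm_first_order_le (hP : IsNesterovPath g X X') (hG : ∀ u ∈ Icc 0 T, ‖g u‖ ≤ G)
    {u : ℝ} (ht : t ∈ Icc 0 T) (hu : u ∈ Icc 0 T) :
    ‖X u - X t - (u - t) • X' t‖ ≤ 4 * G * (u - t) ^ 2 := by
  have hsub : uIcc t u ⊆ Icc 0 T := uIcc_subset_Icc ht hu
  have hG0 : 0 ≤ G := (norm_nonneg _).trans (hG t ht)
  calc ‖X u - X t - (u - t) • X' t‖ ≤ 4 * G * |u - t| * |u - t| := by
        refine norm_first_order_remainder_le
          (fun w hw => (hP.hasDerivWithinAt w (hsub hw).1).mono fun v hv => (hsub hv).1)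
          fun w hw => ?_
        exact (hP.norm_velocity_sub_le hG ht (hsub hw)).trans
          (mul_le_mul_of_nonneg_left (abs_sub_left_of_mem_uIcc hw) (by positivity))
    _ = 4 * G * (u - t) ^ 2 := by rw [mul_assoc, abs_mul_abs_self, sq]

theorem norm_second_order_le (hP : IsNesterovPath g X X') {u η : ℝ} (ht : 0 < t) (hu : 0 < u)
    (hη : ∀ w ∈ uIcc t u, ‖nesterovAccel g X' w - nesterovAccel g X' t‖ ≤ η) :
    ‖X u - X t - (u - t) • X' t - ((u - t) ^ 2 / 2) • nesterovAccel g X' t‖ ≤ η * (u - t) ^ 2 := by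
  have hpos : ∀ w ∈ uIcc t u, 0 < w := fun w hw => (lt_min ht hu).trans_le hw.1
  exact norm_second_order_remainder_le
    (fun w hw => (hP.hasDerivWithinAt w (hpos w hw).le).hasDerivAt (Ici_mem_nhds (hpos w hw)))
    (fun w hw => hP.hasDerivAt_velocity w (hpos w hw)) hη

end IsNesterovPath

/-- At `m = 0` the momentum term vanishes because `0 - 1 = 0` in `ℕ`, matching `y₀ = x₀`. -/
def momentumDefect (F : V → V) (s : ℝ) (μ : ℕ → ℝ) (z : ℕ → V) (m : ℕ) : V :=
  z (m + 1) - z m - μ m • (z m - z (m - 1)) + s • F (z m)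

theorem momentumDefect_apply_mul (F : V → V) (s : ℝ) (μ : ℕ → ℝ) (X : ℝ → V) (h : ℝ) (m : ℕ) :
    momentumDefect F s μ (fun m : ℕ => X (m * h)) m =
      X (m * h + h) - X (m * h) - μ m • (X (m * h) - X ((m - 1 : ℕ) * h)) + s • F (X (m * h)) := by
  simp [momentumDefect, add_mul]

section MomentumScheme

variable {F : V → V} {L h : ℝ} {μ : ℕ → ℝ} {x y z : ℕ → V}

theorem momentum_error_step (hF : ∀ a b, ‖F a - F b‖ ≤ L * ‖a - b‖) (hL : 0 ≤ L)
    (hh : 0 ≤ h) (hh1 : h ≤ 1) {m : ℕ} (hμ : |μ m| ≤ 1)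
    (hx : x (m + 1) = y m - h ^ 2 • F (y m)) (hy : y m = x m + μ m • (x m - x (m - 1))) :
    h * ‖(x - z) (m + 1)‖ + ‖(x - z) (m + 1) - (x - z) m‖ ≤
      (1 + (1 + 2 * L) * h) * (h * ‖(x - z) m‖ + ‖(x - z) m - (x - z) (m - 1)‖) +
        2 * (L * h ^ 2 * ‖z m - z (m - 1)‖ + ‖momentumDefect F (h ^ 2) μ z m‖) := by
  set e := x - z
  set r := momentumDefect F (h ^ 2) μ z m
  have he : e (m + 1) - e m = μ m • (e m - e (m - 1)) - h ^ 2 • (F (y m) - F (z m)) - r := by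
    simp only [e, r, momentumDefect, Pi.sub_apply, hx, hy]
    module
  have hyz : ‖y m - z m‖ ≤ ‖e m‖ + ‖e m - e (m - 1)‖ + ‖z m - z (m - 1)‖ := by
    have : y m - z m = e m + μ m • (e m - e (m - 1)) + μ m • (z m - z (m - 1)) := by
      simp only [e, Pi.sub_apply, hy]
      module
    rw [this]
    refine (norm_add₃_le).trans (add_le_add (add_le_add le_rfl ?_) ?_) <;>
      exact (norm_smul_le _ _).trans (mul_le_of_le_one_left (norm_nonneg _) hμ)
  have hdiff : ‖e (m + 1) - e m‖ ≤ ‖e m - e (m - 1)‖ +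
      h ^ 2 * (L * (‖e m‖ + ‖e m - e (m - 1)‖ + ‖z m - z (m - 1)‖)) + ‖r‖ := by
    rw [he]
    refine (norm_sub_le _ _).trans (add_le_add ((norm_sub_le _ _).trans (add_le_add ?_ ?_)) le_rfl)
    · exact (norm_smul_le _ _).trans (mul_le_of_le_one_left (norm_nonneg _) hμ)
    · rw [norm_smul, Real.norm_of_nonneg (by positivity)]
      exact mul_le_mul_of_nonneg_left ((hF _ _).trans (mul_le_mul_of_nonneg_left hyz hL))
        (by positivity)
  have herr : ‖e (m + 1)‖ ≤ ‖e m‖ + ‖e (m + 1) - e m‖ := by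
    simpa using norm_add_le (e m) (e (m + 1) - e m)
  have ha := norm_nonneg (e m)
  have hd := norm_nonneg (e m - e (m - 1))
  have hΔ := norm_nonneg (z m - z (m - 1))
  have hρ := norm_nonneg r
  have h1h : 0 ≤ 1 - h := by linarith
  calc _ ≤ h * ‖e m‖ + (1 + h) * ‖e (m + 1) - e m‖ := by
        linarith [mul_le_mul_of_nonneg_left herr hh]
    _ ≤ h * ‖e m‖ + (1 + h) * (‖e m - e (m - 1)‖ +
          h ^ 2 * (L * (‖e m‖ + ‖e m - e (m - 1)‖ + ‖z m - z (m - 1)‖)) + ‖r‖) := by gcongr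
    _ ≤ _ := by
      -- the difference of the two sides is exactly the sum of these four products
      linarith [mul_nonneg (mul_nonneg (sq_nonneg h) ha) (add_nonneg zero_le_one
          (mul_nonneg hL h1h)),
        mul_nonneg (mul_nonneg (mul_nonneg (mul_nonneg hd hh) hL) h1h) (by linarith : 0 ≤ 2 + h),
        mul_nonneg (mul_nonneg (mul_nonneg hΔ hL) (sq_nonneg h)) h1h, mul_nonneg hρ h1h]

theorem momentum_error_le (hF : ∀ a b, ‖F a - F b‖ ≤ L * ‖a - b‖) (hL : 0 ≤ L)
    (hh : 0 ≤ h) (hh1 : h ≤ 1) (hμ : ∀ m, |μ m| ≤ 1)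
    (hx : ∀ m, x (m + 1) = y m - h ^ 2 • F (y m)) (hy : ∀ m, y m = x m + μ m • (x m - x (m - 1)))
    (h0 : x 0 = z 0) (k : ℕ) :
    h * ‖x k - z k‖ ≤ 2 * (∑ m ∈ Finset.range k,
      (L * h ^ 2 * ‖z m - z (m - 1)‖ + ‖momentumDefect F (h ^ 2) μ z m‖)) *
        Real.exp ((1 + 2 * L) * h * k) := by
  set w : ℕ → ℝ := fun m => h * ‖(x - z) m‖ + ‖(x - z) m - (x - z) (m - 1)‖
  have hw0 : w 0 = 0 := by simp [w, h0]
  have hgronwall := discrete_gronwall (u := w) (c := fun _ => (1 + 2 * L) * h) hw0.ge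
    (fun m _ => momentum_error_step hF hL hh hh1 (hμ m) (hx m) (hy m))
    (fun _ _ => by positivity) (fun _ _ => by positivity) (Nat.zero_le k)
  simp only [← Finset.range_eq_Ico, hw0, zero_add, Finset.sum_const, Finset.card_range,
    nsmul_eq_mul] at hgronwall
  calc h * ‖x k - z k‖ ≤ w k := le_add_of_nonneg_right (norm_nonneg _)
    _ ≤ _ := hgronwall.trans_eq (by rw [Finset.mul_sum, mul_comm (k : ℝ)])

end MomentumScheme

def nesterovMomentum (m : ℕ) : ℝ := ((m : ℝ) - 1) / ((m : ℝ) + 2)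

theorem one_sub_nesterovMomentum (m : ℕ) : 1 - nesterovMomentum m = 3 / ((m : ℝ) + 2) := by
  unfold nesterovMomentum
  field_simp
  ring

theorem abs_nesterovMomentum_le_one (m : ℕ) : |nesterovMomentum m| ≤ 1 := by
  unfold nesterovMomentum
  rw [abs_le, le_div_iff₀ (by positivity), div_le_one (by positivity)]
  constructor <;> linarith [(m.cast_nonneg : (0 : ℝ) ≤ m)]

/-- Substituting `h² F(X t) = -h² Ẍ(t) - (3 h / m) Ẋ(t)` leaves two second-order Taylor
remainders and the mismatch between `1 - μ_m = 3 / (m + 2)` and `3 / m`. -/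
theorem momentumDefect_eq_taylor (F : V → V) (X X' : ℝ → V) {h : ℝ} {m : ℕ} (hm : 1 ≤ m)
    (hh : h ≠ 0) :
    momentumDefect F (h ^ 2) nesterovMomentum (fun m : ℕ => X (m * h)) m =
      (X (m * h + h) - X (m * h) - h • X' (m * h) -
          (h ^ 2 / 2) • nesterovAccel (fun t => F (X t)) X' (m * h)) +
        nesterovMomentum m • (X (m * h - h) - X (m * h) + h • X' (m * h) -
          (h ^ 2 / 2) • nesterovAccel (fun t => F (X t)) X' (m * h)) -
        (3 * h ^ 2 / (m + 2)) • ((2 / (m * h)) • X' (m * h) +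
          (1 / 2 : ℝ) • nesterovAccel (fun t => F (X t)) X' (m * h)) := by
  have hcast : ((m - 1 : ℕ) : ℝ) * h = m * h - h := by simp [Nat.cast_sub hm, sub_mul]
  have hm0 : (m : ℝ) ≠ 0 := by positivity
  rw [momentumDefect_apply_mul, hcast]
  simp only [nesterovAccel, nesterovMomentum]
  match_scalars <;> field_simp <;> ring

section Consistency

variable {F : V → V} {X X' : ℝ → V} {G T h : ℝ} {m : ℕ}

namespace IsNesterovPath

theorem norm_sample_sub_pred_le (hP : IsNesterovPath (fun t => F (X t)) X X')
    (hG : ∀ u ∈ Icc 0 T, ‖F (X u)‖ ≤ G) (hh : 0 ≤ h) (hm : m * h ≤ T) :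
    ‖X (m * h) - X ((m - 1 : ℕ) * h)‖ ≤ G * T * h := by
  cases m with
  | zero =>
    have hT : 0 ≤ T := by simpa using hm
    simpa using mul_nonneg (mul_nonneg ((norm_nonneg _).trans (hG 0 ⟨le_rfl, hT⟩)) hT) hh
  | succ j =>
    simpa [add_mul] using hP.norm_sub_le_mul_sub hG (a := j * h) (b := (j + 1) * h)
      (by positivity) (by linarith) (by push_cast at hm; linarith)

theorem norm_sample_sub_pred_sub_smul_le (hP : IsNesterovPath (fun t => F (X t)) X X')
    (hG : ∀ u ∈ Icc 0 T, ‖F (X u)‖ ≤ G) (hh : 0 ≤ h) (hm : m * h ≤ T) :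
    ‖X (m * h) - X ((m - 1 : ℕ) * h) - h • X' (m * h)‖ ≤ 4 * G * h ^ 2 := by
  cases m with
  | zero =>
    have hT : 0 ≤ T := by simpa using hm
    simpa [hP.velocity_zero] using
      mul_nonneg (mul_nonneg zero_le_four ((norm_nonneg _).trans (hG 0 ⟨le_rfl, hT⟩))) (sq_nonneg h)
  | succ j =>
    set t : ℝ := (j + 1 : ℕ) * h
    have hj : ((j + 1 - 1 : ℕ) : ℝ) * h = t - h := by simp [t, add_mul]
    have := hP.norm_first_order_le hG (t := t) (u := t - h) ⟨by positivity, hm⟩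
      ⟨by simp [t, add_mul]; positivity, by linarith⟩
    rw [hj, ← norm_neg,
      show -(X t - X (t - h) - h • X' t) = X (t - h) - X t - (t - h - t) • X' t by module]
    exact this.trans_eq (by ring)

theorem norm_momentumDefect_le (hP : IsNesterovPath (fun t => F (X t)) X X')
    (hG : ∀ u ∈ Icc 0 T, ‖F (X u)‖ ≤ G) (hh : 0 ≤ h) (hm : m * h + h ≤ T) :
    ‖momentumDefect F (h ^ 2) nesterovMomentum (fun m : ℕ => X (m * h)) m‖ ≤ 12 * G * h ^ 2 := by
  set t : ℝ := m * h
  set μ := nesterovMomentum m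
  have ht : t ∈ Icc 0 T := ⟨by positivity, by linarith⟩
  have hfwd : ‖X (t + h) - X t - h • X' t‖ ≤ 4 * G * h ^ 2 := by
    simpa using hP.norm_first_order_le hG ht (u := t + h) ⟨by positivity, hm⟩
  have hbwd : ‖μ • (X t - X ((m - 1 : ℕ) * h) - h • X' t)‖ ≤ 4 * G * h ^ 2 :=
    (norm_smul_le _ _).trans (mul_le_of_le_one_left (norm_nonneg _)
      (abs_nesterovMomentum_le_one m) |>.trans (hP.norm_sample_sub_pred_sub_smul_le hG hh ht.2))
  have hvel : ‖((1 - μ) * h) • X' t‖ ≤ 3 * G * h ^ 2 := by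
    have hv := hP.norm_velocity_le (fun u hu => hG u ⟨hu.1, hu.2.trans ht.2⟩) ht.1
    have hG0 : 0 ≤ G := (norm_nonneg _).trans (hG t ht)
    rw [norm_smul, one_sub_nesterovMomentum, Real.norm_of_nonneg (by positivity)]
    calc 3 / ((m : ℝ) + 2) * h * ‖X' t‖ ≤ 3 / ((m : ℝ) + 2) * h * (G * (m * h)) := by gcongr
      _ ≤ 3 * G * h ^ 2 := by
        rw [div_mul_eq_mul_div, div_mul_eq_mul_div, div_le_iff₀ (by positivity)]
        nlinarith [mul_nonneg hG0 (sq_nonneg h)]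
  have hforce : ‖h ^ 2 • F (X t)‖ ≤ G * h ^ 2 := by
    rw [norm_smul, Real.norm_of_nonneg (by positivity), mul_comm]
    exact mul_le_mul_of_nonneg_right (hG t ht) (by positivity)
  have hsplit : momentumDefect F (h ^ 2) nesterovMomentum (fun m : ℕ => X (m * h)) m =
      (X (t + h) - X t - h • X' t) - μ • (X t - X ((m - 1 : ℕ) * h) - h • X' t) +
        ((1 - μ) * h) • X' t + h ^ 2 • F (X t) := by
    rw [momentumDefect_apply_mul]
    module
  rw [hsplit]
  calc _ ≤ ‖X (t + h) - X t - h • X' t‖ + ‖μ • (X t - X ((m - 1 : ℕ) * h) - h • X' t)‖ +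
        ‖((1 - μ) * h) • X' t‖ + ‖h ^ 2 • F (X t)‖ :=
        norm_add₃_le.trans (by gcongr; exact norm_sub_le _ _)
    _ ≤ 12 * G * h ^ 2 := by linarith

theorem norm_momentumDefect_le_of_oscillation (hP : IsNesterovPath (fun t => F (X t)) X X')
    (hG : ∀ u ∈ Icc 0 T, ‖F (X u)‖ ≤ G) {δ η : ℝ} (hh : 0 < h) (hhδ : h < δ) (hδm : δ ≤ m * h)
    (hm : m * h + h ≤ T)
    (hη : ∀ w ∈ Icc (m * h - h) (m * h + h), ‖nesterovAccel (fun t => F (X t)) X' w -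
      nesterovAccel (fun t => F (X t)) X' (m * h)‖ ≤ η) :
    ‖momentumDefect F (h ^ 2) nesterovMomentum (fun m : ℕ => X (m * h)) m‖ ≤
      (2 * η + 12 * G * h / δ) * h ^ 2 := by
  set t : ℝ := m * h
  set A := nesterovAccel (fun t => F (X t)) X' t
  set μ := nesterovMomentum m
  have hm1 : 1 ≤ m := by exact_mod_cast (show (1 : ℝ) ≤ m by nlinarith)
  have ht : t ∈ Icc 0 T := ⟨by positivity, by linarith⟩
  have hfwd : ‖X (t + h) - X t - h • X' t - (h ^ 2 / 2) • A‖ ≤ η * h ^ 2 := by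
    simpa using hP.norm_second_order_le (u := t + h) (by linarith) (by linarith) fun w hw =>
      hη w (uIcc_subset_Icc (a₁ := t) ⟨by linarith, by linarith⟩ ⟨by linarith, le_rfl⟩ hw)
  have hbwd : ‖X (t - h) - X t + h • X' t - (h ^ 2 / 2) • A‖ ≤ η * h ^ 2 := by
    have := hP.norm_second_order_le (u := t - h) (by linarith) (by linarith) fun w hw =>
      hη w (uIcc_subset_Icc (a₁ := t) ⟨by linarith, by linarith⟩ ⟨le_rfl, by linarith⟩ hw)
    convert this using 2 <;> [module; ring]
  have hmom : ‖μ • (X (t - h) - X t + h • X' t - (h ^ 2 / 2) • A)‖ ≤ η * h ^ 2 :=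
    (norm_smul_le _ _).trans
      (mul_le_of_le_one_left (norm_nonneg _) (abs_nesterovMomentum_le_one m) |>.trans hbwd)
  have htail : ‖(3 * h ^ 2 / (m + 2)) • ((2 / t) • X' t + (1 / 2 : ℝ) • A)‖ ≤
      12 * G * h ^ 3 / δ := by
    have ht0 : 0 < t := by linarith
    have hv := hP.norm_velocity_le (fun u hu => hG u ⟨hu.1, hu.2.trans ht.2⟩) ht.1
    have ha := hP.norm_accel_le hG ht0 ht.2
    have hG0 : 0 ≤ G := (norm_nonneg _).trans (hG t ht)
    rw [norm_smul, Real.norm_of_nonneg (by positivity)]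
    calc _ ≤ 3 * h ^ 2 / (m + 2) * (2 / t * (G * t) + 1 / 2 * (4 * G)) := by
          refine mul_le_mul_of_nonneg_left ((norm_add_le _ _).trans ?_) (by positivity)
          rw [norm_smul, norm_smul, Real.norm_of_nonneg (by positivity),
            Real.norm_of_nonneg (by positivity)]
          gcongr
      _ = 12 * G * h ^ 2 / (m + 2) := by field_simp; ring
      _ ≤ 12 * G * h ^ 3 / δ := by
          rw [div_le_div_iff₀ (by positivity) (by linarith)]
          nlinarith [mul_le_mul_of_nonneg_left (show δ ≤ (m + 2) * h by linarith)
            (by positivity : 0 ≤ 12 * G * h ^ 2)]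
  have hsplit := momentumDefect_eq_taylor F X X' hm1 hh.ne'
  rw [hsplit]
  calc _ ≤ η * h ^ 2 + η * h ^ 2 + 12 * G * h ^ 3 / δ :=
        (norm_sub_le _ _).trans (add_le_add ((norm_add_le _ _).trans (add_le_add hfwd hmom)) htail)
    _ = (2 * η + 12 * G * h / δ) * h ^ 2 := by ring

theorem norm_momentumDefect_le_ite (hP : IsNesterovPath (fun t => F (X t)) X X')
    (hG : ∀ u ∈ Icc 0 T, ‖F (X u)‖ ≤ G) {δ η ω : ℝ} (hh : 0 < h) (hhδ : h < δ / 2)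
    (hhω : h < ω) (hm : m * h + h ≤ T)
    (hA : ∀ a ∈ Icc (δ / 2) T, ∀ b ∈ Icc (δ / 2) T, dist a b < ω →
      dist (nesterovAccel (fun t => F (X t)) X' a) (nesterovAccel (fun t => F (X t)) X' b) < η) :
    ‖momentumDefect F (h ^ 2) nesterovMomentum (fun m : ℕ => X (m * h)) m‖ ≤
      if m * h < δ then 12 * G * h ^ 2 else (2 * η + 12 * G * h / δ) * h ^ 2 := by
  split_ifs with hmδ
  · exact hP.norm_momentumDefect_le hG hh.le hm
  have hmem : ∀ u ∈ Icc (m * h - h) (m * h + h), u ∈ Icc (δ / 2) T := fun u hu =>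
    ⟨by linarith [hu.1, not_lt.1 hmδ], hu.2.trans hm⟩
  refine hP.norm_momentumDefect_le_of_oscillation hG hh (by linarith) (not_lt.1 hmδ) hm
    fun w hw => ?_
  rw [← dist_eq_norm]
  refine (hA w (hmem w hw) _ (hmem _ ⟨by linarith, by linarith⟩) ?_).le
  rw [Real.dist_eq, abs_lt]
  constructor <;> linarith [hw.1, hw.2]

/-- The steps with `m h < δ` only get the crude bound `O(h²)`, but there are `O(δ / h)` of them. -/
theorem eventually_sum_norm_momentumDefect_le (hP : IsNesterovPath (fun t => F (X t)) X X')
    (hT : 0 < T) {ε : ℝ} (hε : 0 < ε) :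
    ∀ᶠ h in 𝓝[>] 0, ∀ k : ℕ, k * h ≤ T → ∑ m ∈ Finset.range k,
      ‖momentumDefect F (h ^ 2) nesterovMomentum (fun m : ℕ => X (m * h)) m‖ ≤ ε * h := by
  obtain ⟨G, hG⟩ := hP.exists_norm_force_le T
  have hG0 : 0 ≤ G := (norm_nonneg _).trans (hG 0 ⟨le_rfl, hT.le⟩)
  set δ := ε / (48 * G + 1)
  have hδ : 0 < δ := by positivity
  have hGδ : 12 * G * δ ≤ ε / 4 := by
    rw [mul_div_assoc', div_le_div_iff₀ (by positivity) (by norm_num)]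
    nlinarith
  set η := ε / (8 * T)
  have hηT : 2 * η * T = ε / 4 := by simp only [η]; field_simp; ring
  obtain ⟨ω, hω, hA⟩ := Metric.uniformContinuousOn_iff.1
    (isCompact_Icc.uniformContinuousOn_of_continuous (hP.continuousOn_accel.mono
      fun u hu => (half_pos hδ).trans_le hu.1)) η (by positivity)
  have hsmall : ∀ᶠ h in 𝓝[>] (0 : ℝ), h < δ / 2 ∧ h < ω ∧ 12 * G * (1 + T / δ) * h ≤ ε / 2 :=
    nhdsWithin_le_nhds ((eventually_lt_nhds (half_pos hδ)).and ((eventually_lt_nhds hω).and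
      (((continuous_const_mul _).tendsto' 0 0 (mul_zero _)).eventually
        (eventually_le_nhds (half_pos hε)))))
  filter_upwards [self_mem_nhdsWithin, hsmall] with h (hh : 0 < h) ⟨hhδ, hhω, hrest⟩ k hk
  calc _ ≤ (δ / h + 1) * (12 * G * h ^ 2) + k * ((2 * η + 12 * G * h / δ) * h ^ 2) := by
        refine sum_range_le_of_le_ite hh hδ.le (by positivity) (by positivity) fun m hm => ?_
        have : (m : ℝ) + 1 ≤ k := by exact_mod_cast hm
        exact hP.norm_momentumDefect_le_ite hG hh hhδ hhω (by nlinarith) hA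
    _ ≤ (δ / h + 1) * (12 * G * h ^ 2) + T / h * ((2 * η + 12 * G * h / δ) * h ^ 2) := by
        gcongr
        rwa [le_div_iff₀ hh]
    _ = (12 * G * δ + 2 * η * T + 12 * G * (1 + T / δ) * h) * h := by
        field_simp
        ring
    _ ≤ ε * h := by gcongr; linarith

theorem norm_iterate_sub_le (hP : IsNesterovPath (fun t => F (X t)) X X')
    (hG : ∀ u ∈ Icc 0 T, ‖F (X u)‖ ≤ G) {L : ℝ} (hF : ∀ a b, ‖F a - F b‖ ≤ L * ‖a - b‖)
    (hL : 0 ≤ L) (hh : 0 < h) (hh1 : h ≤ 1) {x y : ℕ → V} (hx0 : x 0 = X 0)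
    (hx : ∀ m, x (m + 1) = y m - h ^ 2 • F (y m))
    (hy : ∀ m, y m = x m + nesterovMomentum m • (x m - x (m - 1))) {k : ℕ} (hk : k * h ≤ T) :
    h * ‖x k - X (k * h)‖ ≤ 2 * (L * G * T ^ 2 * h ^ 2 + ∑ m ∈ Finset.range k,
      ‖momentumDefect F (h ^ 2) nesterovMomentum (fun m : ℕ => X (m * h)) m‖) *
        Real.exp ((1 + 2 * L) * T) := by
  have hT : 0 ≤ T := (by positivity : (0 : ℝ) ≤ k * h).trans hk
  have hG0 : 0 ≤ G := (norm_nonneg _).trans (hG 0 ⟨le_rfl, hT⟩)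
  have hsteps : ∑ m ∈ Finset.range k, L * h ^ 2 * ‖X (m * h) - X ((m - 1 : ℕ) * h)‖ ≤
      L * G * T ^ 2 * h ^ 2 := by
    calc _ ≤ ∑ m ∈ Finset.range k, L * h ^ 2 * (G * T * h) := by
          refine Finset.sum_le_sum fun m hm => ?_
          have : (m : ℝ) + 1 ≤ k := by exact_mod_cast Finset.mem_range.1 hm
          gcongr
          exact hP.norm_sample_sub_pred_le hG hh.le (by nlinarith)
      _ = L * G * T * h ^ 2 * (k * h) := by simp; ring
      _ ≤ L * G * T * h ^ 2 * T := by gcongr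
      _ = L * G * T ^ 2 * h ^ 2 := by ring
  refine (momentum_error_le hF hL hh.le hh1 abs_nesterovMomentum_le_one hx hy
    (z := fun m : ℕ => X (m * h)) (by simpa using hx0) k).trans ?_
  have hexp : Real.exp ((1 + 2 * L) * h * k) ≤ Real.exp ((1 + 2 * L) * T) :=
    Real.exp_le_exp.2 (by rw [mul_assoc]; gcongr; linarith)
  rw [Finset.sum_add_distrib]
  exact mul_le_mul (by linarith) hexp (by positivity) (by positivity)

theorem eventually_norm_sub_le (hP : IsNesterovPath (fun t => F (X t)) X X') {L : ℝ}
    (hF : ∀ a b, ‖F a - F b‖ ≤ L * ‖a - b‖) (hL : 0 ≤ L) (hT : 0 < T) {ε : ℝ} (hε : 0 < ε) :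
    ∀ᶠ h in 𝓝[>] 0, ∀ x y : ℕ → V, x 0 = X 0 → (∀ m, x (m + 1) = y m - h ^ 2 • F (y m)) →
      (∀ m, y m = x m + nesterovMomentum m • (x m - x (m - 1))) →
      ∀ k : ℕ, k * h ≤ T → ‖x k - X (k * h)‖ ≤ ε := by
  obtain ⟨G, hG⟩ := hP.exists_norm_force_le T
  set K := Real.exp ((1 + 2 * L) * T)
  have hK : 0 < K := Real.exp_pos _
  have hsmall : ∀ᶠ h in 𝓝[>] (0 : ℝ), h ≤ 1 ∧ 2 * L * G * T ^ 2 * K * h ≤ ε / 2 :=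
    nhdsWithin_le_nhds ((eventually_le_nhds one_pos).and
      (((continuous_const_mul _).tendsto' 0 0 (mul_zero _)).eventually
        (eventually_le_nhds (half_pos hε))))
  filter_upwards [self_mem_nhdsWithin, hsmall,
    hP.eventually_sum_norm_momentumDefect_le hT (ε := ε / (4 * K)) (by positivity)]
    with h (hh : 0 < h) ⟨hh1, hLh⟩ hdefect x y hx0 hx hy k hk
  refine le_of_mul_le_mul_left ((hP.norm_iterate_sub_le hG hF hL hh hh1 hx0 hx hy hk).trans ?_) hh
  calc _ ≤ 2 * (L * G * T ^ 2 * h ^ 2 + ε / (4 * K) * h) * K := by gcongr; exact hdefect k hk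
    _ = h * (2 * L * G * T ^ 2 * K * h + ε / 2) := by field_simp; ring
    _ ≤ h * ε := by gcongr; linarith

end IsNesterovPath

end Consistency

end

theorem NesterovIter.eq_momentum {n : ℕ} {f : E n → ℝ} {s : ℝ} {x0 : E n} {x y : ℕ → E n}
    (hxy : NesterovIter n f s x0 x y) (m : ℕ) :
    y m = x m + nesterovMomentum m • (x m - x (m - 1)) := by
  obtain ⟨hx0, hy0, hstep⟩ := hxy
  cases m with
  | zero => simp [hx0, hy0]
  | succ m =>
    rw [(hstep m).2, Nat.add_sub_cancel, nesterovMomentum]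
    congr 2
    push_cast
    ring

theorem NesterovSol.isNesterovPath {n : ℕ} {f : E n → ℝ} {x0 : E n} {X : ℝ → E n}
    (hX : NesterovSol n f x0 X) (hf : Continuous (gradient f)) :
    IsNesterovPath (fun t => gradient f (X t)) X (derivWithin X (Ici 0)) := by
  obtain ⟨-, hC1, hC2, hV0, hODE⟩ := hX
  have hderiv_eq : ∀ t : ℝ, 0 < t → derivWithin X (Ici 0) t = deriv X t := fun t ht =>
    derivWithin_of_mem_nhds (Ici_mem_nhds ht)
  refine ⟨fun t ht => ((hC1.differentiableOn one_ne_zero) t ht).hasDerivWithinAt, hV0,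
    hC1.continuousOn_derivWithin (uniqueDiffOn_Ici 0) le_rfl, fun t ht => ?_,
    (hf.comp_continuousOn hC1.continuousOn)⟩
  have hacc : HasDerivAt (deriv X) (deriv (deriv X) t) t :=
    (((hC2.deriv_of_isOpen isOpen_Ioi (by norm_num)).differentiableOn one_ne_zero) t ht
      |>.differentiableAt (Ioi_mem_nhds ht)).hasDerivAt
  have hval : deriv (deriv X) t = nesterovAccel (fun t => gradient f (X t))
      (derivWithin X (Ici 0)) t := by
    rw [nesterovAccel, hderiv_eq t ht, ← sub_eq_zero, ← hODE t ht]
    module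
  rw [← hval]
  exact hacc.congr_of_eventuallyEq
    (eventually_of_mem (Ioi_mem_nhds ht) fun u hu => hderiv_eq u hu)

/-- **Theorem 2.** As `s → 0⁺`, Nesterov's scheme converges to the ODE
`Ẍ + (3/t)Ẋ + ∇f(X) = 0` uniformly over `0 ≤ k ≤ T/√s`, for every fixed `T > 0`. -/
theorem nesterov_scheme_tendsto_ode (n : ℕ) (f : E n → ℝ) (hf : MemFInf n f)
    (x0 : E n) (X : ℝ → E n) (hX : NesterovSol n f x0 X) (T : ℝ) (hT : 0 < T) :
    ∀ ε > 0, ∃ s₀ > 0, ∀ s : ℝ, 0 < s → s < s₀ →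
      ∀ x y : ℕ → E n, NesterovIter n f s x0 x y →
        ∀ k : ℕ, (k : ℝ) ≤ T / Real.sqrt s →
          ‖x k - X ((k : ℝ) * Real.sqrt s)‖ ≤ ε := by
  obtain ⟨L, hL, -, -, hlip⟩ := hf
  have hgrad : Continuous (gradient f) :=
    (LipschitzWith.of_dist_le_mul (K := ⟨L, hL.le⟩) fun a b => by
      rw [dist_eq_norm, dist_eq_norm]
      exact hlip a b).continuous
  intro ε hε
  obtain ⟨h₀, hh₀, hconv⟩ := (nhdsGT_basis 0).eventually_iff.1
    ((hX.isNesterovPath hgrad).eventually_norm_sub_le hlip hL.le hT hε)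
  refine ⟨h₀ ^ 2, by positivity, fun s hs hs₀ x y hxy k hk => ?_⟩
  have hsqrt : 0 < √s := Real.sqrt_pos.2 hs
  refine hconv ⟨hsqrt, (Real.sqrt_lt' hh₀).2 hs₀⟩ x y (hxy.1.trans hX.1.symm)
    (fun m => by rw [Real.sq_sqrt hs.le]; exact (hxy.2.2 m).1) hxy.eq_momentum k
    ((le_div_iff₀ hsqrt).1 hk)
end
end

section
/- Let f ∈ F_∞ attain its minimum f⋆ at a point x⋆, and let X be the solution to the ODE Ẍ + (3/t)Ẋ + ∇f(X) = 0 with X(0) = x₀, Ẋ(0) = 0. Then for every t > 0, f(X(t)) − f⋆ ≤ 2‖x₀ − x⋆‖²/t². -/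
open Set Filter Topology

noncomputable section

/-!
Lyapunov argument. Along the trajectory the energy
`ℰ(t) = t² (f(X t) - f x⋆) + 2 ‖X t + (t/2) Ẋ t - x⋆‖²`
has derivative `2t (f(X t) - f x⋆ - ⟪X t - x⋆, ∇f(X t)⟫)`, because the ODE turns the
derivative of `X + (t/2) Ẋ` into `-(t/2) ∇f(X)`; this is `≤ 0` by convexity of `f`. Hence `ℰ`
is antitone on `(0, ∞)`, so `t² (f(X t) - f x⋆) ≤ ℰ(t)` is bounded by the limit
`2 ‖x₀ - x⋆‖²` of `ℰ` at `0⁺`.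
-/

open scoped Gradient RealInnerProductSpace

theorem tendsto_deriv_nhdsGT_of_contDiffOn_Ici {G : Type*} [NormedAddCommGroup G]
    [NormedSpace ℝ G] {X : ℝ → G} {a : ℝ} (hX : ContDiffOn ℝ 1 X (Ici a)) :
    Tendsto (deriv X) (𝓝[>] a) (𝓝 (derivWithin X (Ici a) a)) := by
  have hcont := (hX.continuousOn_derivWithin (uniqueDiffOn_Ici a) le_rfl).continuousWithinAt
    self_mem_Ici
  refine (hcont.mono Ioi_subset_Ici_self).tendsto.congr' ?_
  filter_upwards [self_mem_nhdsWithin] with t ht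
  exact derivWithin_of_mem_nhds (Ici_mem_nhds ht)

theorem AntitoneOn.le_of_tendsto_nhdsGT {g : ℝ → ℝ} {a l t : ℝ} (hg : AntitoneOn g (Ioi a))
    (hlim : Tendsto g (𝓝[>] a) (𝓝 l)) (ht : a < t) : g t ≤ l := by
  refine ge_of_tendsto hlim ?_
  filter_upwards [Ioo_mem_nhdsGT ht] with s hs
  exact hg hs.1 ht hs.2.le

section

variable {F : Type*} [NormedAddCommGroup F] [InnerProductSpace ℝ F] [CompleteSpace F]

theorem HasGradientAt.comp_hasDerivAt {f : F → ℝ} {f' : F} {γ : ℝ → F} {γ' : F} {t : ℝ}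
    (hf : HasGradientAt f f' (γ t)) (hγ : HasDerivAt γ γ' t) :
    HasDerivAt (f ∘ γ) ⟪f', γ'⟫ t := by
  simpa [InnerProductSpace.toDual_apply_apply] using hf.hasFDerivAt.comp_hasDerivAt t hγ

theorem ConvexOn.add_inner_gradient_le {f : F → ℝ} (hconv : ConvexOn ℝ univ f) {x : F}
    (hf : DifferentiableAt ℝ f x) (y : F) : f x + ⟪∇ f x, y - x⟫ ≤ f y := by
  have hline : ConvexOn ℝ univ (f ∘ AffineMap.lineMap x y) :=
    hconv.comp_affineMap (AffineMap.lineMap x y)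
  have hderiv : HasDerivAt (f ∘ AffineMap.lineMap x y) ⟪∇ f x, y - x⟫ (0 : ℝ) := by
    refine HasGradientAt.comp_hasDerivAt ?_ AffineMap.hasDerivAt_lineMap
    simpa using hf.hasGradientAt
  have := hline.le_slope_of_hasDerivAt (mem_univ (0 : ℝ)) (mem_univ 1) one_pos hderiv
  simp only [slope_def_field, Function.comp_apply, AffineMap.lineMap_apply_zero,
    AffineMap.lineMap_apply_one, sub_zero, div_one] at this
  linarith

end

section

variable {F : Type*} [NormedAddCommGroup F] [InnerProductSpace ℝ F] {f : F → ℝ} {xstar : F}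
  {X : ℝ → F}

def nesterovEnergy (f : F → ℝ) (xstar : F) (X : ℝ → F) (t : ℝ) : ℝ :=
  t ^ 2 * (f (X t) - f xstar) + 2 * ‖X t + (t / 2) • deriv X t - xstar‖ ^ 2

theorem sq_mul_sub_le_nesterovEnergy (t : ℝ) :
    t ^ 2 * (f (X t) - f xstar) ≤ nesterovEnergy f xstar X t :=
  le_add_of_nonneg_right (by positivity)

theorem tendsto_nesterovEnergy_nhdsGT_zero {x0 : F} (hf : ContinuousAt f x0)
    (hX : Tendsto X (𝓝[>] 0) (𝓝 x0)) (hV : Tendsto (deriv X) (𝓝[>] 0) (𝓝 0)) :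
    Tendsto (nesterovEnergy f xstar X) (𝓝[>] 0) (𝓝 (2 * ‖x0 - xstar‖ ^ 2)) := by
  have ht : Tendsto (fun t : ℝ => t) (𝓝[>] 0) (𝓝 0) := nhdsWithin_le_nhds
  have := ((ht.pow 2).mul ((hf.tendsto.comp hX).sub_const (f xstar))).add
    ((((hX.add ((ht.div_const 2).smul hV)).sub_const xstar).norm.pow 2).const_mul 2)
  convert this using 2 <;> simp [nesterovEnergy]

variable [CompleteSpace F]

theorem hasDerivAt_nesterovEnergy {t : ℝ} {V A : F} (ht : t ≠ 0) (hV : HasDerivAt X V t)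
    (hA : HasDerivAt (deriv X) A t) (hf : DifferentiableAt ℝ f (X t))
    (hode : A + (3 / t) • V + ∇ f (X t) = 0) :
    HasDerivAt (nesterovEnergy f xstar X)
      (2 * t * (f (X t) - f xstar - ⟪X t - xstar, ∇ f (X t)⟫)) t := by
  set g := ∇ f (X t)
  have hAeq : A = -((3 / t) • V + g) := by
    rw [← add_eq_zero_iff_eq_neg, ← add_assoc, hode]
  have hu : HasDerivAt (fun s => X s + (s / 2) • deriv X s - xstar) (-((t / 2) • g)) t := by
    refine ((hV.add (((hasDerivAt_id t).div_const 2).smul hA)).sub_const xstar).congr_deriv ?_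
    rw [hAeq, hV.deriv, id]
    match_scalars <;> field_simp
    ring
  have hfX : HasDerivAt (fun s => f (X s) - f xstar) ⟪g, V⟫ t :=
    (hf.hasGradientAt.comp_hasDerivAt hV).sub_const _
  refine (((hasDerivAt_pow 2 t).mul hfX).add (hu.norm_sq.const_mul 2)).congr_deriv ?_
  rw [hV.deriv, inner_neg_right, real_inner_smul_right, add_sub_right_comm, inner_add_left,
    real_inner_smul_left, real_inner_comm g V]
  norm_num
  ring

theorem antitoneOn_nesterovEnergy (hconv : ConvexOn ℝ univ f) (hf : Differentiable ℝ f)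
    (hX : ContDiffOn ℝ 2 X (Ioi 0))
    (hode : ∀ t > (0 : ℝ), deriv (deriv X) t + (3 / t) • deriv X t + ∇ f (X t) = 0) :
    AntitoneOn (nesterovEnergy f xstar X) (Ioi 0) := by
  have hV : ContDiffOn ℝ 1 (deriv X) (Ioi 0) := hX.deriv_of_isOpen isOpen_Ioi (by norm_num)
  have hderiv (t : ℝ) (ht : t ∈ Ioi 0) : HasDerivAt (nesterovEnergy f xstar X)
      (2 * t * (f (X t) - f xstar - ⟪X t - xstar, ∇ f (X t)⟫)) t :=
    hasDerivAt_nesterovEnergy (ne_of_gt ht)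
      ((hX.differentiableOn (by norm_num)).differentiableAt (Ioi_mem_nhds ht)).hasDerivAt
      ((hV.differentiableOn one_ne_zero).differentiableAt (Ioi_mem_nhds ht)).hasDerivAt
      (hf _) (hode t ht)
  refine antitoneOn_of_hasDerivWithinAt_nonpos (convex_Ioi 0)
    (fun t ht => (hderiv t ht).continuousAt.continuousWithinAt)
    (fun t ht => (hderiv t (interior_subset ht)).hasDerivWithinAt) ?_
  rw [interior_Ioi]
  intro t ht
  have hgrad := hconv.add_inner_gradient_le (hf (X t)) xstar
  rw [← neg_sub, inner_neg_right, real_inner_comm] at hgrad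
  exact mul_nonpos_of_nonneg_of_nonpos (by linarith [ht.out]) (by linarith)

end

theorem nesterov_ode_rate_general (n : ℕ) (f : E n → ℝ) (hf : MemFInf n f)
    (xstar : E n)
    (x0 : E n) (X : ℝ → E n) (hX : NesterovSol n f x0 X) :
    ∀ t > (0:ℝ), f (X t) - f xstar ≤ 2 * ‖x0 - xstar‖ ^ 2 / t ^ 2 := by
  intro t ht
  obtain ⟨-, -, hconv, hf1, -⟩ := hf
  obtain ⟨hX0, hX1, hX2, hV0, hode⟩ := hX
  have hdiff : Differentiable ℝ f := hf1.differentiable one_ne_zero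
  have hXlim : Tendsto X (𝓝[>] 0) (𝓝 x0) :=
    hX0 ▸ (hX1.continuousOn.continuousWithinAt self_mem_Ici).mono Ioi_subset_Ici_self
  have hVlim : Tendsto (deriv X) (𝓝[>] 0) (𝓝 0) :=
    hV0 ▸ tendsto_deriv_nhdsGT_of_contDiffOn_Ici hX1
  have hE : nesterovEnergy f xstar X t ≤ 2 * ‖x0 - xstar‖ ^ 2 :=
    (antitoneOn_nesterovEnergy hconv hdiff hX2 hode).le_of_tendsto_nhdsGT
      (tendsto_nesterovEnergy_nhdsGT_zero hdiff.continuous.continuousAt hXlim hVlim) ht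
  rw [le_div_iff₀ (by positivity), mul_comm]
  exact (sq_mul_sub_le_nesterovEnergy t).trans hE

/-- **Theorem 3.** For `f ∈ F_∞` minimized at `x⋆`, the solution of the Nesterov ODE
satisfies `f(X(t)) - f⋆ ≤ 2‖x₀ - x⋆‖²/t²` for every `t > 0`. -/
theorem nesterov_ode_rate (n : ℕ) (f : E n → ℝ) (hf : MemFInf n f)
    (xstar : E n) (hmin : IsMinOn f Set.univ xstar)
    (x0 : E n) (X : ℝ → E n) (hX : NesterovSol n f x0 X) :
    ∀ t > (0:ℝ), f (X t) - f xstar ≤ 2 * ‖x0 - xstar‖ ^ 2 / t ^ 2 :=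
  nesterov_ode_rate_general n f hf xstar x0 X hX
end
end

section
/- Let f ∈ F_L and let X solve the ODE Ẍ + (3/t)Ẋ + ∇f(X) = 0 with X(0) = x₀, Ẋ(0) = 0. Define M(t) = sup_{u ∈ (0,t]} ‖Ẋ(u)‖/u. Then for every t with 0 < t < √(12/L), M(t) ≤ ‖∇f(x₀)‖ / (4(1 − Lt²/12)). -/
/-!
Multiplying the ODE by `t³` turns it into `(t³ Ẋ)' = -t³ ∇f(X)`, so
`u³ ‖Ẋ(u)‖ ≤ ∫₀ᵘ s³ ‖∇f(X(s))‖ ds`. With `M = M(t)`, on `(0, t]` we have `‖Ẋ(s)‖ ≤ M s`, hence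
`‖X(s) - x₀‖ ≤ M s² / 2` and `‖∇f(X(s))‖ ≤ ‖∇f(x₀)‖ + L M s² / 2`. Integrating,
`‖Ẋ(u)‖ / u ≤ ‖∇f(x₀)‖ / 4 + L u² M / 12`, and taking the supremum over `u ∈ (0, t]` gives
`M ≤ ‖∇f(x₀)‖ / 4 + (L t² / 12) M`, which rearranges to the claim because `L t² / 12 < 1`.
`M` is finite since `∇f ∘ X` is bounded on the compact interval `[0, t]`.
-/

open Set Filter Topology

noncomputable section

open MeasureTheory

theorem MemFL.continuous_gradient {n : ℕ} {L : ℝ} {f : E n → ℝ} (hf : MemFL n L f) :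
    Continuous (gradient f) :=
  LipschitzWith.continuous (K := L.toNNReal) <| LipschitzWith.of_dist_le_mul fun x y => by
    simpa only [dist_eq_norm] using (hf.2.2 x y).trans <|
      mul_le_mul_of_nonneg_right (Real.le_coe_toNNReal L) (norm_nonneg _)

theorem MemFL.norm_gradient_le {n : ℕ} {L : ℝ} {f : E n → ℝ} (hf : MemFL n L f) (x y : E n) :
    ‖gradient f x‖ ≤ ‖gradient f y‖ + L * ‖x - y‖ := by
  linarith [norm_sub_norm_le (gradient f x) (gradient f y), hf.2.2 x y]

namespace NesterovSol

variable {n : ℕ} {f : E n → ℝ} {x0 : E n} {X : ℝ → E n}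

theorem deriv_zero (hX : NesterovSol n f x0 X) : deriv X 0 = 0 := by
  obtain ⟨-, -, -, hV0, -⟩ := hX
  by_cases hd : DifferentiableAt ℝ X 0
  · rwa [← hd.derivWithin (uniqueDiffWithinAt_Ici 0)]
  · exact deriv_zero_of_not_differentiableAt hd

theorem continuousOn_deriv (hX : NesterovSol n f x0 X) : ContinuousOn (deriv X) (Ici 0) := by
  have h0 := hX.deriv_zero
  obtain ⟨-, hC1, -, hV0, -⟩ := hX
  refine (hC1.continuousOn_derivWithin (uniqueDiffOn_Ici 0) le_rfl).congr fun s hs => ?_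
  rcases (mem_Ici.mp hs).eq_or_lt with rfl | hs
  · rw [h0, hV0]
  · exact (derivWithin_of_mem_nhds (mem_of_superset (Ioi_mem_nhds hs) Ioi_subset_Ici_self)).symm

theorem hasDerivAt {s : ℝ} (hX : NesterovSol n f x0 X) (hs : 0 < s) :
    HasDerivAt X (deriv X s) s :=
  ((hX.2.2.1.differentiableOn (by norm_num)).differentiableAt (Ioi_mem_nhds hs)).hasDerivAt

theorem hasDerivAt_deriv {s : ℝ} (hX : NesterovSol n f x0 X) (hs : 0 < s) :
    HasDerivAt (deriv X) (deriv (deriv X) s) s :=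
  (((hX.2.2.1.deriv_of_isOpen isOpen_Ioi (by norm_num)).differentiableOn one_ne_zero)
    |>.differentiableAt (Ioi_mem_nhds hs)).hasDerivAt

theorem hasDerivAt_pow_three_smul_deriv {s : ℝ} (hX : NesterovSol n f x0 X) (hs : 0 < s) :
    HasDerivAt (fun r => r ^ 3 • deriv X r) (-s ^ 3 • gradient f (X s)) s := by
  refine ((hasDerivAt_pow 3 s).smul (hX.hasDerivAt_deriv hs)).congr_deriv ?_
  have hode : deriv (deriv X) s + ((3 / s) • deriv X s + gradient f (X s)) = 0 := by
    rw [← add_assoc]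
    exact hX.2.2.2.2 s hs
  rw [eq_neg_of_add_eq_zero_left hode]
  match_scalars
  · field_simp
    ring
  · ring

theorem norm_sub_le_of_norm_deriv_le {s M : ℝ} (hX : NesterovSol n f x0 X) (hs : 0 ≤ s)
    (hV : ∀ r ∈ Ioo 0 s, ‖deriv X r‖ ≤ M * r) : ‖X s - x0‖ ≤ M * s ^ 2 / 2 := by
  have hdisp := norm_sub_le_integral_of_norm_deriv_le_of_le hs
    (hX.2.1.continuousOn.mono Icc_subset_Ici_self)
    (fun r hr => (hX.hasDerivAt hr.1).differentiableAt.differentiableWithinAt)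
    (ae_of_all _ hV) ((continuous_const.mul continuous_id).intervalIntegrable 0 s)
  rw [intervalIntegral.integral_const_mul, integral_id, hX.1] at hdisp
  linarith

theorem norm_deriv_div_le {u a b : ℝ} (hX : NesterovSol n f x0 X) (hu : 0 < u)
    (hgrad : ∀ s ∈ Ioo 0 u, ‖gradient f (X s)‖ ≤ a + b * s ^ 2) :
    ‖deriv X u‖ / u ≤ a / 4 + b * u ^ 2 / 6 := by
  have hbound : ∀ s ∈ Ioo 0 u,
      ‖deriv (fun r => r ^ 3 • deriv X r) s‖ ≤ a * s ^ 3 + b * s ^ 5 := fun s hs => by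
    rw [(hX.hasDerivAt_pow_three_smul_deriv hs.1).deriv, norm_smul, norm_neg, norm_pow,
      Real.norm_of_nonneg hs.1.le]
    nlinarith [mul_le_mul_of_nonneg_left (hgrad s hs) (pow_nonneg hs.1.le 3)]
  have hY := norm_sub_le_integral_of_norm_deriv_le_of_le hu.le
    ((continuousOn_id.pow 3).smul (hX.continuousOn_deriv.mono Icc_subset_Ici_self))
    (fun s hs => (hX.hasDerivAt_pow_three_smul_deriv hs.1).differentiableAt.differentiableWithinAt)
    (ae_of_all _ hbound) ((by fun_prop : Continuous _).intervalIntegrable 0 u)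
  rw [intervalIntegral.integral_add ((by fun_prop : Continuous _).intervalIntegrable 0 u)
    ((by fun_prop : Continuous _).intervalIntegrable 0 u), intervalIntegral.integral_const_mul,
    intervalIntegral.integral_const_mul, integral_pow, integral_pow] at hY
  simp only [Pi.smul_apply', Pi.pow_apply, id_eq, ne_eq, OfNat.ofNat_ne_zero, not_false_eq_true,
    zero_pow, zero_smul, sub_zero, norm_smul, norm_pow, Real.norm_of_nonneg hu.le] at hY
  rw [div_le_iff₀ hu]
  nlinarith [pow_pos hu 3]

theorem bddAbove_norm_deriv_div (hX : NesterovSol n f x0 X) (hg : Continuous (gradient f))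
    (t : ℝ) : BddAbove ((fun u => ‖deriv X u‖ / u) '' Ioc 0 t) := by
  obtain ⟨G, hG⟩ := isCompact_Icc.exists_bound_of_continuousOn
    (hg.comp_continuousOn (hX.2.1.continuousOn.mono (Icc_subset_Ici_self : Icc 0 t ⊆ Ici 0))).norm
  refine ⟨G / 4, ?_⟩
  rintro _ ⟨u, hu, rfl⟩
  simpa using hX.norm_deriv_div_le (b := 0) hu.1 fun s hs => by
    simpa using hG s ⟨hs.1.le, hs.2.le.trans hu.2⟩

end NesterovSol

theorem nesterov_ode_M_bound_general (n : ℕ) (L : ℝ)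
    (f : E n → ℝ) (hf : MemFL n L f)
    (x0 : E n) (X : ℝ → E n) (hX : NesterovSol n f x0 X)
    (t : ℝ) (ht0 : 0 < t) (ht : t < Real.sqrt (12 / L)) :
    sSup ((fun u => ‖deriv X u‖ / u) '' Set.Ioc (0:ℝ) t) ≤
      ‖gradient f x0‖ / (4 * (1 - L * t ^ 2 / 12)) := by
  -- `Real.sqrt` vanishes on nonpositive reals, so `0 < t < √(12/L)` forces `0 < L`.
  have hL : 0 < L :=
    (div_pos_iff_of_pos_left (by norm_num)).mp (Real.sqrt_pos.mp (ht0.trans ht))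
  have hLt : L * t ^ 2 < 12 := by
    have := (Real.lt_sqrt ht0.le).mp ht
    rwa [lt_div_iff₀ hL, mul_comm] at this
  set S := (fun u => ‖deriv X u‖ / u) '' Ioc (0:ℝ) t
  have hS : BddAbove S := hX.bddAbove_norm_deriv_div hf.continuous_gradient t
  have htS : ‖deriv X t‖ / t ∈ S := ⟨t, ⟨ht0, le_rfl⟩, rfl⟩
  set M := sSup S
  have hM0 : 0 ≤ M := (div_nonneg (norm_nonneg _) ht0.le).trans (le_csSup hS htS)
  have hV : ∀ r ∈ Ioc 0 t, ‖deriv X r‖ ≤ M * r := fun r hr =>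
    (div_le_iff₀ hr.1).mp (le_csSup hS ⟨r, hr, rfl⟩)
  have hgrad : ∀ s ∈ Ioc 0 t, ‖gradient f (X s)‖ ≤ ‖gradient f x0‖ + L * M / 2 * s ^ 2 := by
    intro s hs
    have hdist :=
      hX.norm_sub_le_of_norm_deriv_le hs.1.le fun r hr => hV r ⟨hr.1, hr.2.le.trans hs.2⟩
    nlinarith [hf.norm_gradient_le (X s) x0, mul_le_mul_of_nonneg_left hdist hL.le]
  have hM : M ≤ ‖gradient f x0‖ / 4 + L * t ^ 2 / 12 * M := by
    refine csSup_le ⟨_, htS⟩ ?_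
    rintro _ ⟨u, hu, rfl⟩
    refine (hX.norm_deriv_div_le hu.1 fun s hs => hgrad s ⟨hs.1, hs.2.le.trans hu.2⟩).trans ?_
    nlinarith [mul_le_mul_of_nonneg_left (pow_le_pow_left₀ hu.1.le hu.2 2) (mul_nonneg hL.le hM0)]
  rw [le_div_iff₀ (by linarith)]
  linarith

/-- **Lemma (bound on `M(t)`).** For the solution of the Nesterov ODE with `f ∈ F_L`, the
quantity `M(t) = sup_{u ∈ (0,t]} ‖Ẋ(u)‖/u` satisfies
`M(t) ≤ ‖∇f(x₀)‖/(4(1 - Lt²/12))` whenever `0 < t < √(12/L)`. -/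
theorem nesterov_ode_M_bound (n : ℕ) (L : ℝ) (hL : 0 < L)
    (f : E n → ℝ) (hf : MemFL n L f)
    (x0 : E n) (X : ℝ → E n) (hX : NesterovSol n f x0 X)
    (t : ℝ) (ht0 : 0 < t) (ht : t < Real.sqrt (12 / L)) :
    sSup ((fun u => ‖deriv X u‖ / u) '' Set.Ioc (0:ℝ) t) ≤
      ‖gradient f x0‖ / (4 * (1 - L * t ^ 2 / 12)) :=
  nesterov_ode_M_bound_general n L f hf x0 X hX t ht0 ht
end
end
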